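/- arXiv:2412.14818 — 13 statements merged into one kernel-verified Lean document; each statement's English description precedes it below -/
import Mathlib

section
/- For every number of agents n ≥ 2 and every integer k with 1 ≤ k < n, there exists a fair division instance with social impact in which all n agents have identical additive valuations, the optimal utilitarian social welfare opt is strictly positive, and every EFk allocation A satisfies (n − k + 1) · SW(A) ≤ opt. In particular, no approximation to opt better than factor n − k + 1 is possible when requiring EFk, even for identical valuations. -/
open Finset

/-- An allocation: pairwise disjoint bundles covering all goods. -/
def IsAllocation {n : ℕ} {G : Type} (A : Fin n → Finset G) : Prop :=
  (∀ i j, i ≠ j → Disjoint (A i) (A j)) ∧ ∀ g, ∃ i, g ∈ A i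

/-- Utilitarian social welfare with respect to additive social impacts `s`. -/
def SW {n : ℕ} {G : Type} (s : Fin n → G → NNReal) (A : Fin n → Finset G) : NNReal :=
  ∑ i, ∑ g ∈ A i, s i g

/-- Envy-freeness up to `k` goods for additive valuations `v`. -/
def EFk {n : ℕ} {G : Type} [DecidableEq G] (v : Fin n → G → NNReal) (k : ℕ)
    (A : Fin n → Finset G) : Prop :=
  ∀ i j, A j = ∅ ∨ ∃ S ⊆ A j, S.card ≤ k ∧ ∑ g ∈ A j \ S, v i g ≤ ∑ g ∈ A i, v i g

section Aux
variable {n m : ℕ}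

lemma aux_SW_eq (hn : 0 < n) (A : Fin n → Finset (Fin m)) :
    SW (fun i (_ : Fin m) => if i = (⟨0, hn⟩ : Fin n) then (1 : NNReal) else 0) A
      = ((A ⟨0, hn⟩).card : NNReal) := by
  unfold SW
  rw [Finset.sum_eq_single (⟨0, hn⟩ : Fin n)]
  · simp
  · intro b _ hb; simp [hb]
  · simp

lemma aux_sum_card (A : Fin n → Finset (Fin m)) (hA : IsAllocation A) :
    ∑ i, (A i).card = m := by
  obtain ⟨hd, hc⟩ := hA
  have : (univ : Finset (Fin n)).biUnion A = univ := by
    ext g; simpa using hc g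
  calc ∑ i, (A i).card = ((univ : Finset (Fin n)).biUnion A).card := by
        rw [Finset.card_biUnion]; intro i _ j _ hij; exact hd i j hij
    _ = m := by simp [this]

end Aux

/-- For every `n ≥ 2` and `1 ≤ k < n` there is an instance with identical valuations,
strictly positive optimal utilitarian welfare `opt`, in which every `EFk` allocation `A`
satisfies `(n - k + 1) * SW A ≤ opt`. -/
theorem efk_impossibility (n k : ℕ) (hn : 2 ≤ n) (hk1 : 1 ≤ k) (hkn : k < n) :
    ∃ (m : ℕ) (v : Fin m → NNReal) (s : Fin n → Fin m → NNReal) (opt : NNReal),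
      (∃ OPT : Fin n → Finset (Fin m), IsAllocation OPT ∧ SW s OPT = opt) ∧
      (∀ A : Fin n → Finset (Fin m), IsAllocation A → SW s A ≤ opt) ∧
      0 < opt ∧
      (∀ A : Fin n → Finset (Fin m), IsAllocation A → EFk (fun _ => v) k A →
        ((n - k + 1 : ℕ) : NNReal) * SW s A ≤ opt) := by
  have hn0 : 0 < n := by omega
  set m : ℕ := k * (n - 1) * (n - k + 1) with hm
  have hmpos : 0 < m := by
    have : 0 < n - 1 := by omega
    have : 0 < n - k + 1 := by omega
    positivity
  set z : Fin n := ⟨0, hn0⟩ with hz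
  refine ⟨m, fun _ => 1, fun i (_ : Fin m) => if i = z then (1 : NNReal) else 0,
    (m : NNReal), ?_, ?_, ?_, ?_⟩
  · -- optimal allocation: everything to agent z
    refine ⟨fun i => if i = z then univ else ∅, ⟨?_, ?_⟩, ?_⟩
    · intro i j hij
      by_cases hi : i = z; all_goals by_cases hj : j = z; all_goals simp_all
    · intro g; exact ⟨z, by simp⟩
    · rw [aux_SW_eq hn0]; simp [hz]
  · intro A _
    rw [aux_SW_eq hn0]
    have h1 : (A z).card ≤ m := by
      simpa using (A z).card_le_univ
    exact_mod_cast Nat.cast_le.mpr h1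
  · exact_mod_cast hmpos
  · intro A hA hEF
    rw [aux_SW_eq hn0]
    set c : ℕ := (A z).card with hc
    -- if A z = ∅ trivial
    by_cases hz0 : A z = ∅
    · simp [hc, hz0]
    -- key bound: ∀ i, c ≤ (A i).card + k
    have key : ∀ i : Fin n, c ≤ (A i).card + k := by
      intro i
      rcases hEF i z with h | ⟨S, hS, hSk, hle⟩
      · exact absurd h hz0
      have h1 : ((A z \ S).card : NNReal) ≤ ((A i).card : NNReal) := by
        simpa using hle
      have h2 : (A z \ S).card ≤ (A i).card := by exact_mod_cast h1
      have h3 : (A z \ S).card + S.card = c := Finset.card_sdiff_add_card_eq_card hS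
      omega
    -- sum over i ≠ z
    have hsum : ∑ i ∈ univ.erase z, c ≤ ∑ i ∈ univ.erase z, ((A i).card + k) :=
      Finset.sum_le_sum fun i _ => key i
    have hcard_erase : (univ.erase z).card = n - 1 := by
      rw [Finset.card_erase_of_mem (mem_univ z)]; simp
    have hsum2 : ∑ i ∈ univ.erase z, (A i).card + c = m := by
      have h1 := aux_sum_card A hA
      have h2 : ∑ i ∈ univ.erase z, (A i).card + (A z).card = ∑ i, (A i).card :=
        Finset.sum_erase_add _ _ (mem_univ z)
      omega
    have hineq : (n - 1) * c + c ≤ m + (n - 1) * k := by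
      have l1 : ∑ i ∈ univ.erase z, c = (n - 1) * c := by
        rw [Finset.sum_const, hcard_erase, smul_eq_mul]
      have l2 : ∑ i ∈ univ.erase z, ((A i).card + k)
          = (∑ i ∈ univ.erase z, (A i).card) + (n - 1) * k := by
        rw [Finset.sum_add_distrib, Finset.sum_const, hcard_erase, smul_eq_mul]
      rw [l1, l2] at hsum
      linarith
    -- now pure arithmetic: c ≤ k * (n-1)
    have hcle : c ≤ k * (n - 1) := by
      by_contra hcon
      push_neg at hcon
      -- substitute a = n - k ≥ 1, b = k - 1 ≥ 0
      obtain ⟨a, ha⟩ : ∃ a, n = k + a ∧ 1 ≤ a := ⟨n - k, by omega⟩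
      obtain ⟨b, hb⟩ : ∃ b, k = b + 1 := ⟨k - 1, by omega⟩
      have hm' : m = (b + 1) * (b + a) * (a + 1) := by
        rw [hm]; congr 1
        · congr 1; omega
        · omega
      have hn1 : n - 1 = b + a := by omega
      rw [hn1, hm'] at hineq
      rw [hb, hn1] at hcon
      have hineq' : (b + a + 1) * c ≤ (b + 1) * (b + a) * (a + 2) := by nlinarith
      have hcon' : (b + 1) * (b + a) + 1 ≤ c := hcon
      have hmul : (b + a + 1) * ((b + 1) * (b + a) + 1) ≤ (b + a + 1) * c :=
        Nat.mul_le_mul_left _ hcon'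
      nlinarith [ha.2, hineq', hmul, Nat.zero_le (b * ((b + 1) * (b + a)))]
    calc ((n - k + 1 : ℕ) : NNReal) * (c : NNReal)
        = (((n - k + 1) * c : ℕ) : NNReal) := by push_cast; ring
      _ ≤ ((m : ℕ) : NNReal) := by
          apply Nat.cast_le.mpr
          calc (n - k + 1) * c ≤ (n - k + 1) * (k * (n - 1)) :=
                Nat.mul_le_mul_left _ hcle
            _ = m := by rw [hm]; ring
end

section
/- For every number of agents n ≥ 2, there exists a fair division instance with social impact in which all n agents have identical additive valuations, the optimal utilitarian social welfare opt is strictly positive, and every EFX allocation A satisfies n · SW(A) ≤ opt. In particular, no approximation to opt better than factor n is possible when requiring EFX. -/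
open Finset

/-- Envy-freeness up to any good for additive valuations `v`. -/
def EFX {n : ℕ} {G : Type} [DecidableEq G] (v : Fin n → G → NNReal)
    (A : Fin n → Finset G) : Prop :=
  ∀ i j, A j = ∅ ∨ ∀ g ∈ A j, ∑ g' ∈ (A j).erase g, v i g' ≤ ∑ g' ∈ A i, v i g'

lemma sw_eq {n : ℕ} [NeZero n] (A : Fin n → Finset (Fin n)) :
    SW (fun i (_ : Fin n) => if i = 0 then (1 : NNReal) else 0) A
      = ((A 0).card : NNReal) := by
  have h0 : (0 : Fin n) ∈ (Finset.univ : Finset (Fin n)) := mem_univ _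
  unfold SW
  rw [Finset.sum_eq_single (0 : Fin n)]
  · simp
  · intro b _ hb; simp [hb]
  · intro h; exact absurd h0 h

lemma card_sum {n : ℕ} (A : Fin n → Finset (Fin n)) (hA : IsAllocation A) :
    ∑ i, (A i).card = n := by
  obtain ⟨hdisj, hcov⟩ := hA
  have huniv : (Finset.univ : Finset (Fin n)) = Finset.univ.biUnion A := by
    ext g
    simp only [mem_univ, true_iff, mem_biUnion]
    obtain ⟨i, hi⟩ := hcov g
    exact ⟨i, by simp, hi⟩
  have := Finset.card_biUnion (s := (Finset.univ : Finset (Fin n))) (t := A)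
    (fun i _ j _ hij => hdisj i j hij)
  rw [← huniv, Finset.card_univ, Fintype.card_fin] at this
  omega

/-- For every `n ≥ 2` there is an instance with identical valuations, strictly positive
optimal utilitarian welfare `opt`, in which every `EFX` allocation `A` satisfies
`n * SW A ≤ opt`. -/
theorem efx_impossibility (n : ℕ) (hn : 2 ≤ n) :
    ∃ (m : ℕ) (v : Fin m → NNReal) (s : Fin n → Fin m → NNReal) (opt : NNReal),
      (∃ OPT : Fin n → Finset (Fin m), IsAllocation OPT ∧ SW s OPT = opt) ∧
      (∀ A : Fin n → Finset (Fin m), IsAllocation A → SW s A ≤ opt) ∧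
      0 < opt ∧
      (∀ A : Fin n → Finset (Fin m), IsAllocation A → EFX (fun _ => v) A →
        (n : NNReal) * SW s A ≤ opt) := by
  haveI : NeZero n := ⟨by omega⟩
  refine ⟨n, fun _ => 1, fun i _ => if i = 0 then 1 else 0, n, ?_, ?_, ?_, ?_⟩
  · -- optimal allocation: all goods to agent 0
    refine ⟨fun i => if i = 0 then Finset.univ else ∅, ⟨?_, ?_⟩, ?_⟩
    · intro i j hij
      by_cases hi : i = 0 <;> by_cases hj : j = 0 <;>
        simp_all [Finset.disjoint_left]
    · intro g; exact ⟨0, by simp⟩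
    · rw [sw_eq]; simp
  · intro A hA
    rw [sw_eq]
    exact_mod_cast Nat.cast_le.mpr (le_trans (Finset.card_le_card (A 0).subset_univ)
      (by simp))
  · exact_mod_cast (by omega : 0 < n)
  · intro A hA hEFX
    rw [sw_eq]
    -- claim: (A 0).card ≤ 1
    have hcard : (A 0).card ≤ 1 := by
      by_contra h
      push_neg at h
      -- some other agent has empty bundle
      have hsum := card_sum A hA
      have hex : ∃ i : Fin n, i ≠ 0 ∧ A i = ∅ := by
        by_contra hne
        push_neg at hne
        have hge : ∀ i ∈ Finset.univ.erase (0 : Fin n), 1 ≤ (A i).card := by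
          intro i hi
          exact Finset.card_pos.mpr (id
            (hne i (Finset.ne_of_mem_erase hi)))
        have h2 : n - 1 ≤ ∑ i ∈ Finset.univ.erase (0 : Fin n), (A i).card := by
          have := Finset.sum_le_sum hge
          simpa [Finset.card_erase_of_mem] using this
        have heq := Finset.sum_erase_add Finset.univ (fun i => (A i).card)
          (mem_univ (0 : Fin n))
        rw [hsum] at heq
        omega
      obtain ⟨i, hi0, hiemp⟩ := hex
      rcases hEFX i 0 with h0 | hle
      · rw [h0] at h; simp at h
      · obtain ⟨g, hg⟩ := Finset.card_pos.mp (by omega : 0 < (A 0).card)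
        have hthis := hle g hg
        rw [hiemp] at hthis
        simp only [Finset.sum_const, Finset.sum_empty, nsmul_eq_mul, mul_one, Finset.card_empty, Nat.cast_zero] at hthis
        have hz : (((A 0).erase g).card : NNReal) = 0 :=
          le_antisymm hthis (zero_le)
        have : ((A 0).erase g).card = 0 := by exact_mod_cast hz
        rw [Finset.card_erase_of_mem hg] at this
        omega
    calc (n : NNReal) * ((A 0).card : NNReal) ≤ (n : NNReal) * 1 := by
          exact mul_le_mul_right (by exact_mod_cast hcard) _
      _ = n := mul_one _
end

section
/- For every number of agents n ≥ 2, there exists a fair division instance with social impact in which all n agents have identical additive valuations, the optimal utilitarian social welfare opt is strictly positive, and every epistemic EF1 allocation A satisfies n · SW(A) ≤ opt. In particular, no approximation to opt better than factor n is possible when requiring epistemic EF1. -/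
open Finset

/-- Epistemic EF1: for every agent `i` there is an allocation `B` (a certificate) with
`B i = A i` that is EF1 from `i`'s perspective. -/
def EpistemicEF1 {n : ℕ} {G : Type} [DecidableEq G] (v : Fin n → G → NNReal)
    (A : Fin n → Finset G) : Prop :=
  ∀ i, ∃ B : Fin n → Finset G, IsAllocation B ∧ B i = A i ∧
    ∀ j, B j = ∅ ∨ ∃ g ∈ B j, ∑ g' ∈ (B j).erase g, v i g' ≤ ∑ g' ∈ B i, v i g'

lemma alloc_card_sum {n m : ℕ} (A : Fin n → Finset (Fin m)) (h : IsAllocation A) :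
    ∑ i, (A i).card = m := by
  have huniv : Finset.univ.biUnion A = (Finset.univ : Finset (Fin m)) := by
    apply Finset.eq_univ_iff_forall.mpr
    intro g
    obtain ⟨i, hi⟩ := h.2 g
    exact Finset.mem_biUnion.mpr ⟨i, Finset.mem_univ i, hi⟩
  have := Finset.card_biUnion (s := (Finset.univ : Finset (Fin n))) (t := A)
    (fun x _ y _ hxy => h.1 x y hxy)
  rw [huniv, Finset.card_univ, Fintype.card_fin] at this
  omega

lemma SW_eq {n : ℕ} (hn : 0 < n) (A : Fin n → Finset (Fin n)) :
    SW (fun i (_ : Fin n) => if i = (⟨0, hn⟩ : Fin n) then (1 : NNReal) else 0) A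
      = ((A ⟨0, hn⟩).card : NNReal) := by
  unfold SW
  rw [Finset.sum_eq_single (⟨0, hn⟩ : Fin n)]
  · simp
  · intro b _ hb; simp [hb]
  · simp

/-- For every `n ≥ 2` there is an instance with identical valuations, strictly positive
optimal utilitarian welfare `opt`, in which every epistemic EF1 allocation `A` satisfies
`n * SW A ≤ opt`. -/
theorem epistemic_ef1_impossibility (n : ℕ) (hn : 2 ≤ n) :
    ∃ (m : ℕ) (v : Fin m → NNReal) (s : Fin n → Fin m → NNReal) (opt : NNReal),
      (∃ OPT : Fin n → Finset (Fin m), IsAllocation OPT ∧ SW s OPT = opt) ∧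
      (∀ A : Fin n → Finset (Fin m), IsAllocation A → SW s A ≤ opt) ∧
      0 < opt ∧
      (∀ A : Fin n → Finset (Fin m), IsAllocation A → EpistemicEF1 (fun _ => v) A →
        (n : NNReal) * SW s A ≤ opt) := by
  have hn0 : 0 < n := by omega
  set z : Fin n := ⟨0, hn0⟩ with hz
  refine ⟨n, fun _ => 1, fun i _ => if i = z then 1 else 0, (n : NNReal), ?_, ?_, ?_, ?_⟩
  · -- optimal allocation: agent z gets everything
    refine ⟨fun i => if i = z then Finset.univ else ∅, ⟨?_, ?_⟩, ?_⟩
    · intro i j hij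
      rcases eq_or_ne i z with hi | hi
      · have hj : j ≠ z := fun h => hij (hi.trans h.symm)
        simp [hi, hj]
      · simp [hi]
    · intro g; exact ⟨z, by simp⟩
    · rw [SW_eq hn0]; simp [z]
  · -- upper bound
    intro A _
    rw [SW_eq hn0]
    exact_mod_cast Nat.cast_le.mpr ((Finset.card_le_card (Finset.subset_univ _)).trans
      (by simp))
  · exact_mod_cast hn0
  · -- main impossibility
    intro A hA hEEF1
    rw [SW_eq hn0]
    -- each bundle is nonempty
    have hne : ∀ j : Fin n, 1 ≤ (A j).card := by
      intro j
      obtain ⟨B, hBalloc, hBj, hEF1⟩ := hEEF1 j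
      by_contra hc
      have hAj : (A j).card = 0 := by omega
      have hBjcard : (B j).card = 0 := by rw [hBj]; exact hAj
      -- every bundle of B has card ≤ 1
      have hsmall : ∀ l : Fin n, (B l).card ≤ 1 := by
        intro l
        rcases hEF1 l with hl | ⟨g, hg, hle⟩
        · simp [hl]
        · have h1 : (∑ g' ∈ (B l).erase g, (1 : NNReal)) = (((B l).erase g).card : NNReal) := by
            simp
          have h2 : (∑ g' ∈ B j, (1 : NNReal)) = ((B j).card : NNReal) := by simp
          rw [h1, h2] at hle
          have : ((B l).erase g).card ≤ (B j).card := by exact_mod_cast hle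
          have hgerase : ((B l).erase g).card = (B l).card - 1 :=
            Finset.card_erase_of_mem hg
          have hgpos : 1 ≤ (B l).card := Finset.card_pos.mpr ⟨g, hg⟩
          omega
      have hsum := alloc_card_sum B hBalloc
      have : ∑ l, (B l).card ≤ n - 1 := by
        calc ∑ l, (B l).card
            = ∑ l ∈ Finset.univ.erase j, (B l).card + (B j).card :=
              (Finset.sum_erase_add _ _ (Finset.mem_univ j)).symm
          _ ≤ ∑ l ∈ Finset.univ.erase j, 1 + 0 := by
              gcongr with l hl
              · exact hsmall l
              · omega
          _ = n - 1 := by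
              rw [Finset.sum_const, smul_eq_mul, mul_one, Finset.card_erase_of_mem
                (Finset.mem_univ j), Finset.card_univ, Fintype.card_fin, add_zero]
      omega
    -- hence card (A z) ≤ 1
    have hsumA := alloc_card_sum A hA
    have hAz : (A z).card ≤ 1 := by
      have h1 : ∑ l ∈ Finset.univ.erase z, (A l).card + (A z).card = n := by
        rw [Finset.sum_erase_add _ _ (Finset.mem_univ z)]; exact hsumA
      have h2 : n - 1 ≤ ∑ l ∈ Finset.univ.erase z, (A l).card := by
        calc n - 1 = ∑ l ∈ Finset.univ.erase z, 1 := by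
              rw [Finset.sum_const, smul_eq_mul, mul_one, Finset.card_erase_of_mem
                (Finset.mem_univ z), Finset.card_univ, Fintype.card_fin]
          _ ≤ _ := Finset.sum_le_sum (fun l _ => hne l)
      omega
    calc (n : NNReal) * ((A z).card : NNReal) ≤ (n : NNReal) * 1 := by
          gcongr
          exact_mod_cast hAz
      _ = n := mul_one _
end

section
/- In a fair division instance with ordered additive valuations and m = q·n goods, if A is an allocation in which each agent receives exactly one good from each block G^h for every h ∈ [q], then A is EF1. -/
open Finset

/-- Envy-freeness up to one good for additive valuations `v`. -/
def EF1 {n : ℕ} {G : Type} [DecidableEq G] (v : Fin n → G → NNReal)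
    (A : Fin n → Finset G) : Prop :=
  ∀ i j, A j = ∅ ∨ ∃ g ∈ A j, ∑ g' ∈ (A j).erase g, v i g' ≤ ∑ g' ∈ A i, v i g'

/-- Ordered valuations on goods `Fin (q*n)` (goods listed in order of weakly decreasing
value for every agent), partitioned into `q` blocks of `n` consecutive goods: the block of
good `g` is `(g : ℕ) / n`. If every agent receives exactly one good from each block,
the allocation is EF1. -/
theorem blocks_give_EF1 (n q : ℕ) (hn : 0 < n)
    (v : Fin n → Fin (q * n) → NNReal)
    (hord : ∀ i (g h : Fin (q * n)), (g : ℕ) ≤ (h : ℕ) → v i h ≤ v i g)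
    (A : Fin n → Finset (Fin (q * n)))
    (hA : IsAllocation A)
    (hblock : ∀ i, ∀ h < q, ((A i).filter (fun g : Fin (q * n) => (g : ℕ) / n = h)).card = 1) :
    EF1 v A := by
  intro i j
  rcases Nat.eq_zero_or_pos q with hq | hq
  · left
    ext g
    exact absurd g.2 (by simp [hq])
  · right
    have hqn : 0 < q * n := Nat.mul_pos hq hn
    -- choose the representative of each block
    have hex : ∀ k h, h < q → ∃ g, (A k).filter (fun g : Fin (q * n) => (g : ℕ) / n = h) = {g} :=
      fun k h hh => Finset.card_eq_one.mp (hblock k h hh)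
    let f : Fin n → ℕ → Fin (q * n) := fun k h =>
      if hh : h < q then (hex k h hh).choose else ⟨0, hqn⟩
    have hf : ∀ k h (hh : h < q), f k h ∈ A k ∧ ((f k h : ℕ)) / n = h := by
      intro k h hh
      have hspec := (hex k h hh).choose_spec
      have : (hex k h hh).choose ∈ (A k).filter (fun g : Fin (q * n) => (g : ℕ) / n = h) :=
        (Finset.ext_iff.mp hspec _).mpr (Finset.mem_singleton_self _)
      rw [Finset.mem_filter] at this
      simpa [f, dif_pos hh] using this
    have hmem : ∀ k, ∀ x ∈ A k, x = f k ((x : ℕ) / n) := by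
      intro k x hx
      have hxq : (x : ℕ) / n < q := (Nat.div_lt_iff_lt_mul hn).mpr x.2
      have hspec := (hex k ((x : ℕ) / n) hxq).choose_spec
      have : x ∈ (A k).filter (fun g : Fin (q * n) => (g : ℕ) / n = (x : ℕ) / n) :=
        Finset.mem_filter.mpr ⟨hx, rfl⟩
      have := (Finset.ext_iff.mp hspec _).mp this
      rw [Finset.mem_singleton] at this
      simpa [f, dif_pos hxq] using this
    have hAk : ∀ k, A k = (Finset.range q).image (f k) := by
      intro k
      ext x
      constructor
      · intro hx
        refine Finset.mem_image.mpr ⟨(x : ℕ) / n, Finset.mem_range.mpr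
          ((Nat.div_lt_iff_lt_mul hn).mpr x.2), (hmem k x hx).symm⟩
      · rintro hx
        rcases Finset.mem_image.mp hx with ⟨h, hh, rfl⟩
        exact (hf k h (Finset.mem_range.mp hh)).1
    have hinj : ∀ k, ∀ h1 ∈ Finset.range q, ∀ h2 ∈ Finset.range q,
        f k h1 = f k h2 → h1 = h2 := by
      intro k h1 hh1 h2 hh2 heq
      have e1 := (hf k h1 (Finset.mem_range.mp hh1)).2
      have e2 := (hf k h2 (Finset.mem_range.mp hh2)).2
      rw [← e1, ← e2, heq]
    -- sums over bundles as sums over blocks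
    have hsum : ∀ k, ∑ g' ∈ A k, v i g' = ∑ h ∈ Finset.range q, v i (f k h) := by
      intro k
      rw [hAk k]
      exact Finset.sum_image (hinj k)
    refine ⟨f j 0, (hf j 0 hq).1, ?_⟩
    -- the erased bundle
    have herase : (A j).erase (f j 0) = (Finset.Ico 1 q).image (f j) := by
      ext x
      rw [Finset.mem_erase]
      constructor
      · rintro ⟨hne, hx⟩
        refine Finset.mem_image.mpr ⟨(x : ℕ) / n, ?_, (hmem j x hx).symm⟩
        refine Finset.mem_Ico.mpr ⟨?_, (Nat.div_lt_iff_lt_mul hn).mpr x.2⟩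
        by_contra hlt
        push_neg at hlt
        interval_cases h : ((x : ℕ) / n)
        exact hne (by rw [hmem j x hx, h])
      · intro hx
        rcases Finset.mem_image.mp hx with ⟨h, hh, rfl⟩
        rcases Finset.mem_Ico.mp hh with ⟨h1, h2⟩
        refine ⟨?_, (hf j h h2).1⟩
        intro heq
        have e1 := (hf j h h2).2
        have e0 := (hf j 0 hq).2
        rw [heq, e0] at e1
        omega
    rw [herase, Finset.sum_image (fun h1 hh1 h2 hh2 heq =>
      hinj j h1 (Finset.mem_range.mpr (Finset.mem_Ico.mp hh1).2)
        h2 (Finset.mem_range.mpr (Finset.mem_Ico.mp hh2).2) heq),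
      hsum i]
    rw [Finset.sum_Ico_eq_sum_range]
    calc ∑ h ∈ Finset.range (q - 1), v i (f j (1 + h))
        ≤ ∑ h ∈ Finset.range (q - 1), v i (f i h) := by
          refine Finset.sum_le_sum ?_
          intro h hh
          have hh' := Finset.mem_range.mp hh
          have hq1 : h < q := by omega
          have hq2 : 1 + h < q := by omega
          refine hord i (f i h) (f j (1 + h)) ?_
          have e1 := (hf i h hq1).2
          have e2 := (hf j (1 + h) hq2).2
          have l1 : (f i h : ℕ) < (h + 1) * n := by
            have : ((f i h : ℕ)) / n < h + 1 := by omega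
            exact (Nat.div_lt_iff_lt_mul hn).mp this
          have l2 : (h + 1) * n ≤ (f j (1 + h) : ℕ) := by
            have : h + 1 ≤ ((f j (1 + h) : ℕ)) / n := by omega
            exact (Nat.le_div_iff_mul_le hn).mp this
          omega
      _ ≤ ∑ h ∈ Finset.range q, v i (f i h) :=
          Finset.sum_le_sum_of_subset (Finset.range_subset_range.mpr (by omega))
end

section
/- Let a fair division instance with social impact have ordered additive valuations and m = q·n goods, and let A = (A_1,…,A_n) be any allocation. Then there exists an allocation A' = (A'_1,…,A'_n) in which each agent receives exactly one good from each block G^h (h ∈ [q]), which is therefore EF1, and which moreover satisfies n · s_i(A'_i) ≥ s_i(A_i) for every agent i. -/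
open Finset

/-- Extension of an injection defined on a subset to a full injection into a set `t`
of the right cardinality. -/
lemma extend_inj {α β : Type} [Fintype α] [DecidableEq α] [DecidableEq β]
    (S : Finset α) (t : Finset β) (f : α → β)
    (hf : ∀ i ∈ S, f i ∈ t) (hinj : ∀ i ∈ S, ∀ j ∈ S, f i = f j → i = j)
    (hcard : t.card = Fintype.card α) :
    ∃ c : α → β, Function.Injective c ∧ (∀ i, c i ∈ t) ∧ ∀ i ∈ S, c i = f i := by
  classical
  set P := S.image f with hP
  have hPt : P ⊆ t := by
    intro b hb
    obtain ⟨i, hi, rfl⟩ := Finset.mem_image.mp hb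
    exact hf i hi
  have hPcard : P.card = S.card :=
    Finset.card_image_of_injOn (fun i hi j hj => hinj i hi j hj)
  have hcc : (Sᶜ).card = (t \ P).card := by
    rw [Finset.card_compl, Finset.card_sdiff_of_subset hPt, hcard, hPcard]
  let e := Finset.equivOfCardEq hcc
  refine ⟨fun i => if hi : i ∈ S then f i else
      (e ⟨i, Finset.mem_compl.mpr hi⟩ : β), ?_, ?_, ?_⟩
  · intro i j hij
    by_cases hi : i ∈ S <;> by_cases hj : j ∈ S <;>
      simp only [hi, hj, dif_pos, dif_neg, not_false_iff] at hij
    · exact hinj i hi j hj hij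
    · exfalso
      have h1 : f i ∈ P := Finset.mem_image_of_mem f hi
      have h2 := (e ⟨j, Finset.mem_compl.mpr hj⟩).2
      rw [← hij] at h2
      exact (Finset.mem_sdiff.mp h2).2 h1
    · exfalso
      have h1 : f j ∈ P := Finset.mem_image_of_mem f hj
      have h2 := (e ⟨i, Finset.mem_compl.mpr hi⟩).2
      rw [hij] at h2
      exact (Finset.mem_sdiff.mp h2).2 h1
    · have := e.injective (Subtype.ext hij)
      exact congrArg Subtype.val this
  · intro i
    by_cases hi : i ∈ S
    · simpa [hi] using hf i hi
    · simp only [hi, dif_neg, not_false_iff]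
      exact (Finset.mem_sdiff.mp (e ⟨i, Finset.mem_compl.mpr hi⟩).2).1
  · intro i hi
    simp [hi]

/-- For ordered valuations on goods `Fin (q*n)` (blocks of `n` consecutive goods; the block
of good `g` is `(g : ℕ) / n`) and any allocation `A`, there is an allocation `A'` giving
each agent exactly one good from each block (hence EF1) with `n * s i (A' i) ≥ s i (A i)`
for every agent `i`. -/
theorem ef1_transformation (n q : ℕ) (hn : 0 < n)
    (v : Fin n → Fin (q * n) → NNReal)
    (hord : ∀ i (g h : Fin (q * n)), (g : ℕ) ≤ (h : ℕ) → v i h ≤ v i g)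
    (s : Fin n → Fin (q * n) → NNReal)
    (A : Fin n → Finset (Fin (q * n)))
    (hA : IsAllocation A) :
    ∃ A' : Fin n → Finset (Fin (q * n)),
      IsAllocation A' ∧
      (∀ i, ∀ h < q, ((A' i).filter (fun g : Fin (q * n) => (g : ℕ) / n = h)).card = 1) ∧
      EF1 v A' ∧
      ∀ i, ∑ g ∈ A i, s i g ≤ (n : NNReal) * ∑ g ∈ A' i, s i g := by
  classical
  rcases Nat.eq_zero_or_pos q with hq | hq
  · -- q = 0: no goods at all
    subst hq
    refine ⟨fun _ => ∅, ⟨fun i j _ => by simp, fun g => by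
        exact absurd g.isLt (by simp)⟩, by simp, fun i j => Or.inl rfl, fun i => ?_⟩
    have : A i = ∅ := Finset.eq_empty_of_forall_notMem (fun g _ => by
      exact absurd g.isLt (by simp))
    simp [this]
  -- now q > 0
  have hqn : 0 < q * n := Nat.mul_pos hq hn
  set g0 : Fin (q * n) := ⟨0, hqn⟩ with hg0
  -- blocks
  set B : ℕ → Finset (Fin (q * n)) :=
    fun h => univ.filter (fun g => (g : ℕ) / n = h) with hB
  have hBmem : ∀ (h : ℕ) (g : Fin (q * n)), g ∈ B h ↔ (g : ℕ) / n = h := by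
    intro h g; simp [hB]
  have hBcard : ∀ h < q, (B h).card = n := by
    intro h hh
    have hemb : ∀ k : Fin n, h * n + (k : ℕ) < q * n := by
      intro k
      calc h * n + (k : ℕ) < h * n + n := by omega
        _ = (h + 1) * n := by ring
        _ ≤ q * n := Nat.mul_le_mul_right n hh
    have : B h = univ.image (fun k : Fin n => (⟨h * n + k, hemb k⟩ : Fin (q * n))) := by
      ext g
      simp only [hBmem, Finset.mem_image, Finset.mem_univ, true_and]
      constructor
      · intro hg
        refine ⟨⟨(g : ℕ) % n, Nat.mod_lt _ hn⟩, ?_⟩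
        apply Fin.ext
        simp only
        rw [← hg, mul_comm]
        exact Nat.div_add_mod _ _
      · rintro ⟨k, rfl⟩
        simp only
        rw [add_comm, Nat.add_mul_div_right _ _ hn, Nat.div_eq_of_lt k.isLt]
        omega
    rw [this, Finset.card_image_of_injective _ (fun a b hab => by
      apply Fin.ext
      have := congrArg (fun x : Fin (q * n) => (x : ℕ)) hab
      simp only at this
      omega), Finset.card_univ, Fintype.card_fin]
  -- restriction of A i to block h
  set T : ℕ → Fin n → Finset (Fin (q * n)) :=
    fun h i => (A i).filter (fun g => (g : ℕ) / n = h) with hT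
  have hTsubA : ∀ h i, T h i ⊆ A i := fun h i => Finset.filter_subset _ _
  have hTsubB : ∀ h i, T h i ⊆ B h := by
    intro h i g hg
    rw [hBmem]
    exact (Finset.mem_filter.mp hg).2
  -- best pick for each agent in each block
  have hpick : ∀ (h : ℕ) (i : Fin n), ∃ p : Fin (q * n),
      (T h i).Nonempty → p ∈ T h i ∧ ∀ g ∈ T h i, s i g ≤ s i p := by
    intro h i
    by_cases hne : (T h i).Nonempty
    · obtain ⟨b, hb, hmax⟩ := Finset.exists_max_image (T h i) (s i) hne
      exact ⟨b, fun _ => ⟨hb, hmax⟩⟩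
    · exact ⟨g0, fun h' => absurd h' hne⟩
  choose pick hpick using hpick
  -- extend picks to a full assignment per block
  have hext : ∀ h : ℕ, ∃ c : Fin n → Fin (q * n), h < q →
      Function.Injective c ∧ (∀ i, c i ∈ B h) ∧
      ∀ i, (T h i).Nonempty → c i = pick h i := by
    intro h
    by_cases hh : h < q
    · obtain ⟨c, hc1, hc2, hc3⟩ := extend_inj
        (univ.filter (fun i : Fin n => (T h i).Nonempty)) (B h) (pick h)
        (fun i hi => hTsubB h i ((hpick h i (Finset.mem_filter.mp hi).2).1))
        (fun i hi j hj hij => by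
          by_contra hne
          have h1 : pick h i ∈ A i :=
            hTsubA h i ((hpick h i (Finset.mem_filter.mp hi).2).1)
          have h2 : pick h j ∈ A j :=
            hTsubA h j ((hpick h j (Finset.mem_filter.mp hj).2).1)
          rw [hij] at h1
          exact Finset.disjoint_left.mp (hA.1 i j hne) (hij ▸ h1) h2)
        (by rw [hBcard h hh, Fintype.card_fin])
      exact ⟨c, fun _ => ⟨hc1, hc2, fun i hi =>
        hc3 i (Finset.mem_filter.mpr ⟨Finset.mem_univ i, hi⟩)⟩⟩
    · exact ⟨fun _ => g0, fun h' => absurd h' hh⟩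
  choose C hC using hext
  have hCinj : ∀ h < q, Function.Injective (C h) := fun h hh => (hC h hh).1
  have hCmem : ∀ h < q, ∀ i, ((C h i : Fin (q * n)) : ℕ) / n = h := by
    intro h hh i
    exact (hBmem h (C h i)).mp ((hC h hh).2.1 i)
  have hCpick : ∀ h < q, ∀ i, (T h i).Nonempty → C h i = pick h i :=
    fun h hh => (hC h hh).2.2
  -- the new allocation
  set A' : Fin n → Finset (Fin (q * n)) :=
    fun i => (Finset.range q).image (fun h => C h i) with hA'
  have hA'mem : ∀ i g, g ∈ A' i ↔ ∃ h < q, C h i = g := by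
    intro i g; simp [hA']
  -- filter of A' i by block h is the singleton {C h i}
  have hfilter : ∀ i, ∀ h < q,
      (A' i).filter (fun g : Fin (q * n) => (g : ℕ) / n = h) = {C h i} := by
    intro i h hh
    ext g
    simp only [Finset.mem_filter, Finset.mem_singleton, hA'mem]
    constructor
    · rintro ⟨⟨h', hh', rfl⟩, hgh⟩
      rw [hCmem h' hh' i] at hgh
      subst hgh
      rfl
    · rintro rfl
      exact ⟨⟨h, hh, rfl⟩, hCmem h hh i⟩
  -- every good in block h is assigned: C h is surjective onto B h
  have hCsurj : ∀ h < q, ∀ g ∈ B h, ∃ i, C h i = g := by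
    intro h hh g hg
    have himg : univ.image (C h) = B h := by
      apply Finset.eq_of_subset_of_card_le
      · intro g' hg'
        obtain ⟨i, _, rfl⟩ := Finset.mem_image.mp hg'
        exact (hC h hh).2.1 i
      · rw [hBcard h hh, Finset.card_image_of_injective _ (hCinj h hh),
          Finset.card_univ, Fintype.card_fin]
    rw [← himg] at hg
    obtain ⟨i, _, rfl⟩ := Finset.mem_image.mp hg
    exact ⟨i, rfl⟩
  have hdiv : ∀ g : Fin (q * n), (g : ℕ) / n < q := by
    intro g
    exact (Nat.div_lt_iff_lt_mul hn).mpr g.isLt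
  refine ⟨A', ⟨?_, ?_⟩, ?_, ?_, ?_⟩
  · -- disjointness
    intro i j hij
    rw [Finset.disjoint_left]
    intro g hgi hgj
    obtain ⟨h, hh, rfl⟩ := (hA'mem i g).mp hgi
    obtain ⟨h', hh', hgj'⟩ := (hA'mem j _).mp hgj
    have : h' = h := by
      have e1 := hCmem h hh i
      have e2 := hCmem h' hh' j
      rw [hgj'] at e2
      omega
    rw [this] at hgj'
    exact hij (hCinj h hh hgj').symm
  · -- covering
    intro g
    obtain ⟨i, hi⟩ := hCsurj ((g : ℕ) / n) (hdiv g) g ((hBmem _ g).mpr rfl)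
    exact ⟨i, (hA'mem i g).mpr ⟨(g : ℕ) / n, hdiv g, hi⟩⟩
  · -- one good per block
    intro i h hh
    rw [hfilter i h hh, Finset.card_singleton]
  · -- EF1
    intro i j
    right
    refine ⟨C 0 j, (hA'mem j _).mpr ⟨0, hq, rfl⟩, ?_⟩
    have herase : (A' j).erase (C 0 j) = (Finset.Ico 1 q).image (fun h => C h j) := by
      ext g
      simp only [Finset.mem_erase, hA'mem, Finset.mem_image, Finset.mem_Ico]
      constructor
      · rintro ⟨hne, h, hh, rfl⟩
        refine ⟨h, ⟨?_, hh⟩, rfl⟩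
        rcases Nat.eq_zero_or_pos h with rfl | h1
        · exact absurd rfl hne
        · exact h1
      · rintro ⟨h, ⟨h1, hh⟩, rfl⟩
        refine ⟨?_, h, hh, rfl⟩
        intro heq
        have e1 := hCmem h hh j
        have e2 := hCmem 0 hq j
        rw [heq] at e1
        omega
    rw [herase]
    have hIinj : ∀ x ∈ Finset.Ico 1 q, ∀ y ∈ Finset.Ico 1 q,
        C x j = C y j → x = y := by
      intro x hx y hy hxy
      have e1 := hCmem x (Finset.mem_Ico.mp hx).2 j
      have e2 := hCmem y (Finset.mem_Ico.mp hy).2 j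
      rw [hxy] at e1
      omega
    rw [Finset.sum_image hIinj]
    have step1 : ∑ h ∈ Finset.Ico 1 q, v i (C h j)
        ≤ ∑ h ∈ Finset.Ico 1 q, v i (C (h - 1) i) := by
      apply Finset.sum_le_sum
      intro h hh
      obtain ⟨h1, h2⟩ := Finset.mem_Ico.mp hh
      apply hord
      have e1 := hCmem (h - 1) (by omega) i
      have e2 := hCmem h h2 j
      have : ((C (h - 1) i : Fin (q * n)) : ℕ) / n < ((C h j : Fin (q * n)) : ℕ) / n := by
        omega
      exact le_of_lt (Nat.lt_of_div_lt_div this)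
    refine le_trans step1 ?_
    have step2 : ∑ h ∈ Finset.Ico 1 q, v i (C (h - 1) i)
        = ∑ h ∈ Finset.range (q - 1), v i (C h i) := by
      rw [Finset.sum_Ico_eq_sum_range]
      apply Finset.sum_congr rfl
      intro h _
      have e : 1 + h - 1 = h := by omega
      rw [e]
    rw [step2]
    have step3 : ∑ h ∈ Finset.range (q - 1), v i (C h i)
        ≤ ∑ h ∈ Finset.range q, v i (C h i) := by
      apply Finset.sum_le_sum_of_subset
      exact Finset.range_subset_range.mpr (by omega)
    refine le_trans step3 ?_
    rw [hA', Finset.sum_image (fun x hx y hy hxy => by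
      have e1 := hCmem x (Finset.mem_range.mp hx) i
      have e2 := hCmem y (Finset.mem_range.mp hy) i
      rw [hxy] at e1
      omega)]
  · -- social impact
    intro i
    have hsplit : ∑ g ∈ A i, s i g
        = ∑ h ∈ Finset.range q, ∑ g ∈ T h i, s i g := by
      rw [hT]
      exact (Finset.sum_fiberwise_of_maps_to
        (fun g _ => Finset.mem_range.mpr (hdiv g)) (s i)).symm
    rw [hsplit]
    have hbound : ∀ h ∈ Finset.range q,
        ∑ g ∈ T h i, s i g ≤ (n : NNReal) * s i (C h i) := by
      intro h hhr
      have hh := Finset.mem_range.mp hhr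
      by_cases hne : (T h i).Nonempty
      · obtain ⟨hpm, hpmax⟩ := hpick h i hne
        rw [hCpick h hh i hne]
        calc ∑ g ∈ T h i, s i g ≤ (T h i).card • s i (pick h i) :=
              Finset.sum_le_card_nsmul _ _ _ hpmax
          _ = ((T h i).card : NNReal) * s i (pick h i) := by
              rw [nsmul_eq_mul]
          _ ≤ (n : NNReal) * s i (pick h i) := by
              apply mul_le_mul_left
              have : (T h i).card ≤ n :=
                le_trans (Finset.card_le_card (hTsubB h i)) (le_of_eq (hBcard h hh))
              exact_mod_cast this
      · rw [Finset.not_nonempty_iff_eq_empty.mp hne]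
        simp
    calc ∑ h ∈ Finset.range q, ∑ g ∈ T h i, s i g
        ≤ ∑ h ∈ Finset.range q, (n : NNReal) * s i (C h i) :=
          Finset.sum_le_sum hbound
      _ = (n : NNReal) * ∑ h ∈ Finset.range q, s i (C h i) := by
          rw [Finset.mul_sum]
      _ = (n : NNReal) * ∑ g ∈ A' i, s i g := by
          congr 1
          rw [hA', Finset.sum_image (fun x hx y hy hxy => by
            have e1 := hCmem x (Finset.mem_range.mp hx) i
            have e2 := hCmem y (Finset.mem_range.mp hy) i
            rw [hxy] at e1
            omega)]
end

section
/- For every fair division instance with social impact whose additive valuations are ordered, there exists an EF1 allocation A such that n · SW(A) ≥ opt, i.e., an EF1 allocation that is an n-approximation of the maximum utilitarian social welfare. -/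
open Finset

/-- For ordered additive valuations (goods `Fin m` listed in order of weakly decreasing
value for every agent), there exists an EF1 allocation `A` whose utilitarian social
welfare is an `n`-approximation of the optimum: `SW B ≤ n * SW A` for every allocation `B`. -/
theorem ef1_n_approx_ordered (n m : ℕ) (hn : 0 < n)
    (v : Fin n → Fin m → NNReal)
    (hord : ∀ i (g h : Fin m), (g : ℕ) ≤ (h : ℕ) → v i h ≤ v i g)
    (s : Fin n → Fin m → NNReal) :
    ∃ A : Fin n → Finset (Fin m), IsAllocation A ∧ EF1 v A ∧
      ∀ B : Fin n → Finset (Fin m), IsAllocation B → SW s B ≤ (n : NNReal) * SW s A := by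
  classical
  rcases Nat.eq_zero_or_pos m with hm | hm
  · refine ⟨fun _ => ∅, ⟨fun i j _ => by simp, fun g => absurd g.isLt (by omega)⟩,
      fun i j => Or.inl rfl, ?_⟩
    intro B hB
    have hB0 : ∀ i, B i = ∅ :=
      fun i => Finset.eq_empty_of_forall_notMem (fun g _ => absurd g.isLt (by omega))
    simp [SW, hB0]
  have hnem : Nonempty (Fin n) := ⟨⟨0, hn⟩⟩
  -- choose, for each block k, a champion agent/good pair maximizing social impact
  have hkey : ∀ k : ℕ, ∃ (a : Fin n) (b : Fin n) (c : Fin m),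
      (∃ g : Fin m, (g : ℕ) / n = k) →
        ((c : ℕ) / n = k ∧ (c : ℕ) % n = (b : ℕ) ∧
          ∀ g : Fin m, (g : ℕ) / n = k → ∀ i', s i' g ≤ s a c) := by
    intro k
    by_cases hk : ∃ g : Fin m, (g : ℕ) / n = k
    · obtain ⟨g₀, hg₀⟩ := hk
      have hne : (univ.filter (fun g : Fin m => (g : ℕ) / n = k)).Nonempty :=
        ⟨g₀, by simp [hg₀]⟩
      obtain ⟨c, hc, hcmax⟩ := Finset.exists_max_image _
        (fun g : Fin m => univ.sup (fun i' => s i' g)) hne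
      obtain ⟨a, -, ha⟩ := Finset.exists_max_image (univ : Finset (Fin n))
        (fun i' => s i' c) univ_nonempty
      refine ⟨a, ⟨(c : ℕ) % n, Nat.mod_lt _ hn⟩, c,
        fun _ => ⟨(Finset.mem_filter.mp hc).2, rfl, ?_⟩⟩
      intro g hg i'
      have h1 : s i' g ≤ univ.sup (fun i'' => s i'' g) :=
        Finset.le_sup (f := fun i'' => s i'' g) (mem_univ i')
      have h2 : univ.sup (fun i'' => s i'' g) ≤ univ.sup (fun i'' => s i'' c) :=
        hcmax g (by simp [hg])
      have h3 : univ.sup (fun i'' => s i'' c) ≤ s a c :=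
        Finset.sup_le fun i'' _ => ha i'' (mem_univ _)
      exact le_trans h1 (le_trans h2 h3)
    · exact ⟨Classical.arbitrary _, Classical.arbitrary _, ⟨0, hm⟩, fun h => absurd h hk⟩
  choose ist jst C hC using hkey
  set σ : ℕ → Equiv.Perm (Fin n) := fun k => Equiv.swap (jst k) (ist k) with hσ
  set f : Fin m → Fin n :=
    fun g => σ ((g : ℕ) / n) ⟨(g : ℕ) % n, Nat.mod_lt _ hn⟩ with hf
  set A : Fin n → Finset (Fin m) := fun i => univ.filter (fun g => f g = i) with hA
  have hmemA : ∀ (g : Fin m) (i : Fin n), g ∈ A i ↔ f g = i := by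
    intro g i; simp [hA]
  -- in a full block, every agent gets exactly one good
  have hfull : ∀ (k : ℕ) (i : Fin n), n * k + n ≤ m →
      ∃ u : Fin m, (u : ℕ) = n * k + ((σ k).symm i : ℕ) ∧ f u = i := by
    intro k i hk
    set r : Fin n := (σ k).symm i with hr
    have hu : n * k + (r : ℕ) < m := by have := r.isLt; omega
    refine ⟨⟨n * k + (r : ℕ), hu⟩, rfl, ?_⟩
    have hd : (n * k + (r : ℕ)) / n = k := by
      rw [Nat.mul_add_div hn, Nat.div_eq_of_lt r.isLt]; omega
    have hmo : (n * k + (r : ℕ)) % n = (r : ℕ) := by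
      rw [Nat.mul_add_mod, Nat.mod_eq_of_lt r.isLt]
    show σ ((n * k + (r : ℕ)) / n) ⟨(n * k + (r : ℕ)) % n, Nat.mod_lt _ hn⟩ = i
    have hfin : (⟨(n * k + (r : ℕ)) % n, Nat.mod_lt _ hn⟩ : Fin n) = r := Fin.ext hmo
    rw [hd, hfin, hr, Equiv.apply_symm_apply]
  -- within a block, each agent holds at most one good
  have huniq : ∀ (g g' : Fin m), f g = f g' → (g : ℕ) / n = (g' : ℕ) / n → g = g' := by
    intro g g' hfg hdiv
    simp only [hf, hdiv] at hfg
    have h2 : (g : ℕ) % n = (g' : ℕ) % n := by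
      simpa using congrArg Fin.val ((σ _).injective hfg)
    have e1 := Nat.div_add_mod (g : ℕ) n
    have e2 := Nat.div_add_mod (g' : ℕ) n
    rw [hdiv, h2] at e1
    apply Fin.ext
    omega
  -- the champion good of a realized block goes to the champion agent
  have hchamp : ∀ k : ℕ, (∃ g : Fin m, (g : ℕ) / n = k) → f (C k) = ist k := by
    intro k hk
    obtain ⟨hdiv, hmod, -⟩ := hC k hk
    show σ ((C k : ℕ) / n) ⟨(C k : ℕ) % n, Nat.mod_lt _ hn⟩ = ist k
    have hfin : (⟨(C k : ℕ) % n, Nat.mod_lt _ hn⟩ : Fin n) = jst k := Fin.ext hmod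
    rw [hdiv, hfin, hσ]
    exact Equiv.swap_apply_left _ _
  have hAalloc : IsAllocation A := by
    constructor
    · intro i j hij
      rw [Finset.disjoint_left]
      intro g hgi hgj
      exact hij (((hmemA g i).mp hgi).symm.trans ((hmemA g j).mp hgj))
    · intro g; exact ⟨f g, (hmemA g (f g)).mpr rfl⟩
  have hEF1 : EF1 v A := by
    intro i j
    by_cases hj : A j = ∅
    · exact Or.inl hj
    right
    have hjne : (A j).Nonempty := Finset.nonempty_iff_ne_empty.mpr hj
    obtain ⟨g0, hg0mem, hg0min⟩ : ∃ g0 ∈ A j, ∀ t ∈ A j, g0 ≤ t :=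
      ⟨(A j).min' hjne, Finset.min'_mem _ _, fun t ht => Finset.min'_le _ _ ht⟩
    refine ⟨g0, hg0mem, ?_⟩
    have hblock : ∀ t ∈ (A j).erase g0, 1 ≤ (t : ℕ) / n := by
      intro t ht
      obtain ⟨htne, htj⟩ := Finset.mem_erase.mp ht
      by_contra h
      have hdiv : (t : ℕ) / n = 0 := Nat.lt_one_iff.mp (not_le.mp h)
      have hg0t : (g0 : ℕ) ≤ (t : ℕ) := hg0min t htj
      have hg0d : (g0 : ℕ) / n = 0 :=
        Nat.le_zero.mp (hdiv ▸ Nat.div_le_div_right (c := n) hg0t)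
      exact htne (huniq t g0
        (by rw [(hmemA t j).mp htj, (hmemA g0 j).mp hg0mem])
        (by rw [hdiv, hg0d]))
    set φ : Fin m → Fin m := fun t =>
      ⟨(n * ((t : ℕ) / n - 1) + ((σ ((t : ℕ) / n - 1)).symm i : ℕ)) % m,
        Nat.mod_lt _ hm⟩ with hφ
    have hφspec : ∀ t ∈ (A j).erase g0,
        φ t ∈ A i ∧ (φ t : ℕ) / n = (t : ℕ) / n - 1 ∧ (φ t : ℕ) ≤ (t : ℕ) := by
      intro t ht
      have h1 : 1 ≤ (t : ℕ) / n := hblock t ht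
      set k := (t : ℕ) / n - 1 with hk
      have hmul : n * k + n = n * ((t : ℕ) / n) := by
        obtain ⟨q, hq⟩ : ∃ q, (t : ℕ) / n = q + 1 := ⟨(t : ℕ) / n - 1, by omega⟩
        rw [hk, hq, Nat.add_sub_cancel, Nat.mul_succ]
      have hle : n * ((t : ℕ) / n) ≤ (t : ℕ) := by
        rw [mul_comm]; exact Nat.div_mul_le_self _ _
      have h2 : n * k + n ≤ m := by
        rw [hmul]; exact hle.trans (le_of_lt t.isLt)
      obtain ⟨u, hu1, hu2⟩ := hfull k i h2
      have hlt : n * k + ((σ k).symm i : ℕ) < m := by rw [← hu1]; exact u.isLt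
      have hφval : (φ t : ℕ) = n * k + ((σ k).symm i : ℕ) := by
        show (n * k + ((σ k).symm i : ℕ)) % m = _
        exact Nat.mod_eq_of_lt hlt
      have hφt : φ t = u := Fin.ext (by rw [hφval, hu1])
      refine ⟨hφt ▸ (hmemA u i).mpr hu2, ?_, ?_⟩
      · rw [hφval, Nat.mul_add_div hn, Nat.div_eq_of_lt ((σ k).symm i).isLt]
        omega
      · have : (φ t : ℕ) < n * ((t : ℕ) / n) := by
          rw [hφval, ← hmul]
          have := ((σ k).symm i).isLt
          omega
        omega
    have hinj : ∀ t₁ ∈ (A j).erase g0, ∀ t₂ ∈ (A j).erase g0, φ t₁ = φ t₂ → t₁ = t₂ := by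
      intro t₁ h₁ t₂ h₂ heq
      have e1 := (hφspec t₁ h₁).2.1
      have e2 := (hφspec t₂ h₂).2.1
      have hb1 := hblock t₁ h₁
      have hb2 := hblock t₂ h₂
      have hdd : (t₁ : ℕ) / n = (t₂ : ℕ) / n := by rw [heq] at e1; omega
      exact huniq t₁ t₂
        (by rw [(hmemA t₁ j).mp (mem_of_mem_erase h₁),
                (hmemA t₂ j).mp (mem_of_mem_erase h₂)]) hdd
    calc ∑ g' ∈ (A j).erase g0, v i g'
        ≤ ∑ t ∈ (A j).erase g0, v i (φ t) :=
          Finset.sum_le_sum (fun t ht => hord i (φ t) t (hφspec t ht).2.2)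
      _ = ∑ u ∈ ((A j).erase g0).image φ, v i u := (Finset.sum_image hinj).symm
      _ ≤ ∑ g' ∈ A i, v i g' := Finset.sum_le_sum_of_subset (by
          intro u hu
          obtain ⟨t, ht, rfl⟩ := Finset.mem_image.mp hu
          exact (hφspec t ht).1)
  refine ⟨A, hAalloc, hEF1, ?_⟩
  intro B hB
  obtain ⟨hBd, hBc⟩ := hB
  have step1 : SW s B ≤ ∑ i, ∑ g ∈ B i, s (ist ((g : ℕ) / n)) (C ((g : ℕ) / n)) := by
    refine Finset.sum_le_sum fun i _ => Finset.sum_le_sum fun g _ => ?_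
    exact (hC ((g : ℕ) / n) ⟨g, rfl⟩).2.2 g rfl i
  have hBuniv : (univ : Finset (Fin n)).biUnion B = univ := by
    apply Finset.eq_univ_of_forall
    intro g
    obtain ⟨i, hi⟩ := hBc g
    exact Finset.mem_biUnion.mpr ⟨i, mem_univ _, hi⟩
  have step2 : ∑ i, ∑ g ∈ B i, s (ist ((g : ℕ) / n)) (C ((g : ℕ) / n))
      = ∑ g : Fin m, s (ist ((g : ℕ) / n)) (C ((g : ℕ) / n)) := by
    rw [← hBuniv, Finset.sum_biUnion (fun i _ j _ hij => hBd i j hij)]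
  set T : Finset ℕ := univ.image (fun g : Fin m => (g : ℕ) / n) with hT
  have step3 : ∑ g : Fin m, s (ist ((g : ℕ) / n)) (C ((g : ℕ) / n))
      = ∑ k ∈ T, ∑ g ∈ univ.filter (fun g : Fin m => (g : ℕ) / n = k),
          s (ist ((g : ℕ) / n)) (C ((g : ℕ) / n)) :=
    (Finset.sum_fiberwise_of_maps_to (fun g _ => Finset.mem_image_of_mem _ (mem_univ g)) _).symm
  have step4 : ∀ k ∈ T, ∑ g ∈ univ.filter (fun g : Fin m => (g : ℕ) / n = k),
      s (ist ((g : ℕ) / n)) (C ((g : ℕ) / n)) ≤ (n : NNReal) * s (ist k) (C k) := by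
    intro k hk
    have hconst : ∀ g ∈ univ.filter (fun g : Fin m => (g : ℕ) / n = k),
        s (ist ((g : ℕ) / n)) (C ((g : ℕ) / n)) = s (ist k) (C k) := by
      intro g hg
      rw [(Finset.mem_filter.mp hg).2]
    rw [Finset.sum_congr rfl hconst, Finset.sum_const]
    have hcard : (univ.filter (fun g : Fin m => (g : ℕ) / n = k)).card ≤ n := by
      have hc := Finset.card_le_card_of_injOn
        (s := univ.filter (fun g : Fin m => (g : ℕ) / n = k)) (t := univ)
        (fun g : Fin m => (⟨(g : ℕ) % n, Nat.mod_lt _ hn⟩ : Fin n))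
        (fun a _ => mem_univ _) ?_
      · simpa using hc
      · intro a ha b hb hab
        have h1 : (a : ℕ) % n = (b : ℕ) % n := by
          simpa using congrArg Fin.val hab
        have h2 : (a : ℕ) / n = k := (Finset.mem_filter.mp (Finset.mem_coe.mp ha)).2
        have h3 : (b : ℕ) / n = k := (Finset.mem_filter.mp (Finset.mem_coe.mp hb)).2
        have e1 := Nat.div_add_mod (a : ℕ) n
        have e2 := Nat.div_add_mod (b : ℕ) n
        rw [h2] at e1
        rw [h3, ← h1] at e2
        exact Fin.ext (by omega)
    calc (univ.filter (fun g : Fin m => (g : ℕ) / n = k)).card • s (ist k) (C k)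
        = ((univ.filter (fun g : Fin m => (g : ℕ) / n = k)).card : NNReal) * s (ist k) (C k) :=
          nsmul_eq_mul _ _
      _ ≤ (n : NNReal) * s (ist k) (C k) :=
          mul_le_mul_left (by exact_mod_cast hcard) _
  have hreal : ∀ k ∈ T, ∃ g : Fin m, (g : ℕ) / n = k := by
    intro k hk
    obtain ⟨g, -, hg⟩ := Finset.mem_image.mp hk
    exact ⟨g, hg⟩
  have hSWA : SW s A = ∑ g : Fin m, s (f g) g := by
    rw [show SW s A = ∑ i, ∑ g ∈ A i, s i g from rfl,
      ← Finset.sum_fiberwise univ f (fun g => s (f g) g)]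
    refine Finset.sum_congr rfl fun i _ => ?_
    refine Finset.sum_congr ?_ fun g hg => ?_
    · rw [hA]
    · rw [(Finset.mem_filter.mp hg).2]
  have step6 : ∑ k ∈ T, s (ist k) (C k) ≤ SW s A := by
    rw [hSWA]
    have hrw : ∑ k ∈ T, s (ist k) (C k) = ∑ k ∈ T, s (f (C k)) (C k) :=
      Finset.sum_congr rfl fun k hk => by rw [hchamp k (hreal k hk)]
    rw [hrw]
    have hCinj : ∀ k₁ ∈ T, ∀ k₂ ∈ T, C k₁ = C k₂ → k₁ = k₂ := by
      intro k₁ h₁ k₂ h₂ heq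
      have d1 := (hC k₁ (hreal k₁ h₁)).1
      have d2 := (hC k₂ (hreal k₂ h₂)).1
      rw [← d1, ← d2, heq]
    calc ∑ k ∈ T, s (f (C k)) (C k)
        = ∑ g ∈ T.image C, s (f g) g :=
          (Finset.sum_image (f := fun u : Fin m => s (f u) u) hCinj).symm
      _ ≤ ∑ g : Fin m, s (f g) g := Finset.sum_le_sum_of_subset (Finset.subset_univ _)
  calc SW s B ≤ ∑ i, ∑ g ∈ B i, s (ist ((g : ℕ) / n)) (C ((g : ℕ) / n)) := step1
    _ = ∑ g : Fin m, s (ist ((g : ℕ) / n)) (C ((g : ℕ) / n)) := step2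
    _ = ∑ k ∈ T, ∑ g ∈ univ.filter (fun g : Fin m => (g : ℕ) / n = k),
          s (ist ((g : ℕ) / n)) (C ((g : ℕ) / n)) := step3
    _ ≤ ∑ k ∈ T, (n : NNReal) * s (ist k) (C k) := Finset.sum_le_sum step4
    _ = (n : NNReal) * ∑ k ∈ T, s (ist k) (C k) := (Finset.mul_sum _ _ _).symm
    _ ≤ (n : NNReal) * SW s A := mul_le_mul_right step6 _
end

section
/- For every fair division instance with social impact in which all agents have identical additive valuations, there exists an allocation A that is EFX and satisfies n · SW(A) ≥ opt, i.e., an EFX allocation that is an n-approximation of the maximum utilitarian social welfare. -/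
open Finset

/-- The allocation induced by an assignment of goods to agents. -/
def alloc {n m : ℕ} (f : Fin m → Fin n) : Fin n → Finset (Fin m) :=
  fun i => Finset.univ.filter (fun g => f g = i)

lemma alloc_def {n m : ℕ} (f : Fin m → Fin n) (i : Fin n) :
    alloc f i = Finset.univ.filter (fun g => f g = i) := rfl

lemma alloc_isAllocation' {n m : ℕ} (f : Fin m → Fin n) :
    (∀ i j, i ≠ j → Disjoint (alloc f i) (alloc f j)) ∧ ∀ g, ∃ i, g ∈ alloc f i := by
  constructor
  · intro i j hij
    simp only [alloc, Finset.disjoint_left, Finset.mem_filter]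
    rintro g ⟨-, h1⟩ ⟨-, h2⟩
    exact hij (h1 ▸ h2)
  · intro g; exact ⟨f g, by simp [alloc]⟩

lemma sum_alloc {n m : ℕ} (f : Fin m → Fin n) (w : Fin m → NNReal) (i : Fin n) :
    ∑ g ∈ alloc f i, w g = ∑ g, if f g = i then w g else 0 :=
  Finset.sum_filter _ _

lemma sum_sum_alloc {n m : ℕ} (f : Fin m → Fin n) (w : Fin m → NNReal) :
    ∑ i, ∑ g ∈ alloc f i, w g = ∑ g, w g := by
  simp only [sum_alloc]
  rw [Finset.sum_comm]
  refine Finset.sum_congr rfl fun g _ => ?_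
  simp

/-- Key local-search lemma: a minimizer of the sum of squared bundle values is
"EFX with respect to goods of nonzero value". -/
lemma min_prop {n m : ℕ} (v : Fin m → NNReal) (f : Fin m → Fin n)
    (hmin : ∀ f' : Fin m → Fin n,
      ∑ i, (∑ g ∈ alloc f i, v g)^2 ≤ ∑ i, (∑ g ∈ alloc f' i, v g)^2)
    (i j : Fin n) (g : Fin m) (hg : g ∈ alloc f j) (hvg : v g ≠ 0) :
    ∑ g' ∈ (alloc f j).erase g, v g' ≤ ∑ g' ∈ alloc f i, v g' := by
  by_cases hij : i = j
  · subst hij; exact Finset.sum_le_sum_of_subset (Finset.erase_subset _ _)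
  by_contra hlt
  push_neg at hlt
  have hfg : f g = j := (Finset.mem_filter.mp hg).2
  set f2 := Function.update f g i with hf2
  have hAi : alloc f2 i = insert g (alloc f i) := by
    ext g'
    by_cases h : g' = g <;>
      simp [alloc, f2, Function.update_apply, h, hfg, Ne.symm hij]
  have hAj : alloc f2 j = (alloc f j).erase g := by
    ext g'
    by_cases h : g' = g <;>
      simp [alloc, f2, Function.update_apply, h, hij]
  have hA : ∀ i', i' ≠ i → i' ≠ j → alloc f2 i' = alloc f i' := by
    intro i' h1 h2
    ext g'
    by_cases h : g' = g <;>
      simp [alloc, f2, Function.update_apply, h, hfg, Ne.symm h1, Ne.symm h2]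
  set a := ∑ g' ∈ alloc f i, v g' with ha
  set c := v g with hc
  set e := ∑ g' ∈ (alloc f j).erase g, v g' with he
  have hgi : g ∉ alloc f i := by
    simp [alloc, hfg, Ne.symm hij]
  have hsum : ∀ F : Fin n → NNReal, ∑ i', F i' =
      F i + F j + ∑ i' ∈ (Finset.univ.erase i).erase j, F i' := by
    intro F
    rw [← Finset.add_sum_erase _ F (Finset.mem_univ i),
        ← Finset.add_sum_erase _ F (Finset.mem_erase.mpr ⟨Ne.symm hij, Finset.mem_univ j⟩),
        add_assoc]
  have hrest : ∑ i' ∈ (Finset.univ.erase i).erase j, (∑ g' ∈ alloc f2 i', v g')^2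
      = ∑ i' ∈ (Finset.univ.erase i).erase j, (∑ g' ∈ alloc f i', v g')^2 := by
    refine Finset.sum_congr rfl fun i' hi' => ?_
    obtain ⟨h2, h1⟩ := Finset.mem_erase.mp hi'
    rw [hA i' (Finset.mem_erase.mp h1).1 h2]
  have hsj : ∑ g' ∈ alloc f j, v g' = c + e := (Finset.add_sum_erase _ v hg).symm
  have hΦ : ∑ i', (∑ g' ∈ alloc f2 i', v g')^2 < ∑ i', (∑ g' ∈ alloc f i', v g')^2 := by
    rw [hsum (fun i' => (∑ g' ∈ alloc f2 i', v g')^2),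
        hsum (fun i' => (∑ g' ∈ alloc f i', v g')^2), hrest]
    apply add_lt_add_left
    rw [hAi, hAj, Finset.sum_insert hgi, hsj, ← ha, ← he, ← hc]
    have hcpos : 0 < c := lt_of_le_of_ne zero_le (Ne.symm hvg)
    have key : a * c < e * c := mul_lt_mul_of_pos_right hlt hcpos
    calc (c + a)^2 + e^2 = (a^2 + c^2 + e^2) + (a*c + a*c) := by ring
      _ < (a^2 + c^2 + e^2) + (e*c + e*c) := add_lt_add_right (add_lt_add key key) _
      _ = a^2 + (c + e)^2 := by ring
  exact absurd (hmin f2) (not_le.mpr hΦ)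

/-- For identical additive valuations (a single `v` for all agents), there exists an EFX
allocation `A` that is an `n`-approximation of the maximum utilitarian social welfare:
`SW B ≤ n * SW A` for every allocation `B`. -/
theorem efx_n_approx_identical (n m : ℕ) (hn : 0 < n)
    (v : Fin m → NNReal) (s : Fin n → Fin m → NNReal) :
    ∃ A : Fin n → Finset (Fin m), IsAllocation A ∧ EFX (fun _ => v) A ∧
      ∀ B : Fin n → Finset (Fin m), IsAllocation B → SW s B ≤ (n : NNReal) * SW s A := by
  haveI : NeZero n := ⟨hn.ne'⟩
  haveI : Nonempty (Fin n) := ⟨⟨0, hn⟩⟩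
  -- choose a minimizer of the sum of squared bundle values
  obtain ⟨f, -, hfmin0⟩ := Finset.exists_min_image (Finset.univ : Finset (Fin m → Fin n))
    (fun f => ∑ i, (∑ g ∈ alloc f i, v g)^2) Finset.univ_nonempty
  have hfmin : ∀ f' : Fin m → Fin n,
      ∑ i, (∑ g ∈ alloc f i, v g)^2 ≤ ∑ i, (∑ g ∈ alloc f' i, v g)^2 :=
    fun f' => hfmin0 f' (Finset.mem_univ f')
  -- the poorest agent
  obtain ⟨j0, -, hj0⟩ := Finset.exists_min_image (Finset.univ : Finset (Fin n))
    (fun i => ∑ g ∈ alloc f i, v g) Finset.univ_nonempty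
  -- give all zero-value goods to the poorest agent
  set f1 : Fin m → Fin n := fun g => if v g = 0 then j0 else f g with hf1
  have aEq : ∀ i, ∑ g ∈ alloc f1 i, v g = ∑ g ∈ alloc f i, v g := by
    intro i
    rw [sum_alloc, sum_alloc]
    refine Finset.sum_congr rfl fun g _ => ?_
    by_cases hz : v g = 0 <;> simp [f1, hz]
  have P : ∀ (i j : Fin n) (g : Fin m), g ∈ alloc f1 j →
      ∑ g' ∈ (alloc f1 j).erase g, v g' ≤ ∑ g' ∈ alloc f1 i, v g' := by
    intro i j g hg
    have hf1g : f1 g = j := by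
      have := hg; rw [alloc_def, Finset.mem_filter] at this; exact this.2
    by_cases hz : v g = 0
    · have hj : j = j0 := by rw [← hf1g]; simp [f1, hz]
      have he : ∑ g' ∈ (alloc f1 j).erase g, v g' = ∑ g' ∈ alloc f1 j, v g' := by
        have h1 := Finset.add_sum_erase (alloc f1 j) v hg
        rw [hz, zero_add] at h1
        exact h1
      rw [he, aEq, aEq, hj]
      exact hj0 i (Finset.mem_univ i)
    · have hfg : f g = j := by
        have := hf1g; simpa [f1, hz] using this
      have hgf : g ∈ alloc f j := by
        rw [alloc_def, Finset.mem_filter]; exact ⟨Finset.mem_univ g, hfg⟩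
      have heq : ∑ g' ∈ (alloc f1 j).erase g, v g' = ∑ g' ∈ (alloc f j).erase g, v g' := by
        have h1 := Finset.add_sum_erase (alloc f1 j) v hg
        have h2 := Finset.add_sum_erase (alloc f j) v hgf
        have h3 : v g + ∑ g' ∈ (alloc f1 j).erase g, v g'
            = v g + ∑ g' ∈ (alloc f j).erase g, v g' := by
          rw [h1, h2, aEq]
        exact add_left_cancel h3
      rw [heq, aEq]
      exact min_prop v f hfmin i j g hgf hz
  -- averaging over cyclic shifts
  set X : Fin n → NNReal := fun k => ∑ i, ∑ g ∈ alloc f1 (i + k), s i g with hX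
  have hT : ∑ k, X k = ∑ i, ∑ g, s i g := by
    simp only [hX]
    rw [Finset.sum_comm]
    refine Finset.sum_congr rfl fun i _ => ?_
    rw [← sum_sum_alloc f1 (s i)]
    exact Fintype.sum_equiv (Equiv.addLeft i) _ _ (fun k => rfl)
  have hex : ∃ k : Fin n, (∑ i, ∑ g, s i g) ≤ (n : NNReal) * X k := by
    by_contra hc
    push_neg at hc
    have h1 : ∑ k : Fin n, (n : NNReal) * X k < ∑ _k : Fin n, (∑ i, ∑ g, s i g) :=
      Finset.sum_lt_sum_of_nonempty Finset.univ_nonempty (fun k _ => hc k)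
    rw [← Finset.mul_sum, hT, Finset.sum_const, Finset.card_univ, Fintype.card_fin,
        nsmul_eq_mul] at h1
    exact lt_irrefl _ h1
  obtain ⟨k, hk⟩ := hex
  set F : Fin m → Fin n := fun g => f1 g - k with hFdef
  have hF : ∀ i, alloc F i = alloc f1 (i + k) := by
    intro i
    rw [alloc_def, alloc_def]
    ext g
    simp [F, sub_eq_iff_eq_add]
  refine ⟨alloc F, alloc_isAllocation' F, ?_, ?_⟩
  · intro i j
    right
    intro g hg
    rw [hF j] at hg
    simp only [hF i, hF j]
    exact P (i + k) (j + k) g hg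
  · intro B hB
    have h1 : SW s B ≤ ∑ i, ∑ g, s i g := by
      refine Finset.sum_le_sum fun i _ => ?_
      exact Finset.sum_le_sum_of_subset (Finset.subset_univ _)
    have h2 : SW s (alloc F) = X k := by
      simp only [SW, hX]
      exact Finset.sum_congr rfl fun i _ => by rw [hF i]
    rw [h2]
    exact h1.trans hk
end

section
/- Fix an optimal allocation OPT (with SW(OPT) = opt) and define the blocks B_i^k and the quantities δ1, δ2 as in the context. If δ2 ≥ δ1, then every allocation A such that for each agent i and each k ∈ [k_i] the bundle A_i contains at least one good of B_i^k satisfies 2n · SW(A) ≥ opt. -/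
open Finset

/-- Fix an optimal allocation `OPT`. For each agent `i`, `o i 0, o i 1, …` enumerates the
bundle `OPT i` in order of weakly decreasing social impact `s i`, the block `B_i^k`
(for `k < (OPT i).card / n`, 0-indexed) consists of the goods `o i j` for
`k*n ≤ j < (k+1)*n`, and `δ1 = Σ_i Σ_{k < min n |OPT_i|} s i (o i k)` is the social value
of the `n` socially best goods of each bundle. If `δ2 = opt − δ1 ≥ δ1` (i.e. `2·δ1 ≤ opt`),
then every allocation `A` in which each bundle `A i` contains at least one good from each
block `B_i^k` satisfies `opt ≤ 2n · SW A`. -/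
theorem case2_sufficient (n : ℕ) (G : Type) [Fintype G] [DecidableEq G]
    (v s : Fin n → G → NNReal)
    (OPT : Fin n → Finset G) (hOPT : IsAllocation OPT)
    (hopt : ∀ B : Fin n → Finset G, IsAllocation B → SW s B ≤ SW s OPT)
    (o : Fin n → ℕ → G)
    (ho_mem : ∀ i k, k < (OPT i).card → o i k ∈ OPT i)
    (ho_inj : ∀ i k l, k < (OPT i).card → l < (OPT i).card → o i k = o i l → k = l)
    (ho_surj : ∀ i, ∀ g ∈ OPT i, ∃ k < (OPT i).card, o i k = g)
    (ho_sorted : ∀ i k l, k ≤ l → l < (OPT i).card → s i (o i l) ≤ s i (o i k))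
    (hδ : 2 * (∑ i, ∑ k ∈ Finset.range (min n (OPT i).card), s i (o i k)) ≤ SW s OPT)
    (A : Fin n → Finset G) (hA : IsAllocation A)
    (hblock : ∀ i, ∀ k, k < (OPT i).card / n →
      ∃ j, k * n ≤ j ∧ j < (k + 1) * n ∧ o i j ∈ A i) :
    SW s OPT ≤ ((2 * n : ℕ) : NNReal) * SW s A := by

  classical
  rcases Nat.eq_zero_or_pos n with hn | hn
  · subst hn; simp [SW]
  set m : Fin n → ℕ := fun i => (OPT i).card with hm
  -- enumeration of OPT i
  have henum : ∀ i, ∑ g ∈ OPT i, s i g = ∑ j ∈ Finset.range (m i), s i (o i j) := by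
    intro i
    refine (Finset.sum_bij (fun j _ => o i j) ?_ ?_ ?_ ?_).symm
    · intro j hj; exact ho_mem i j (Finset.mem_range.mp hj)
    · intro a ha b hb hab
      exact ho_inj i a b (Finset.mem_range.mp ha) (Finset.mem_range.mp hb) hab
    · intro g hg; obtain ⟨k, hk, hko⟩ := ho_surj i g hg
      exact ⟨k, Finset.mem_range.mpr hk, hko⟩
    · intro j hj; rfl
  set d1 := ∑ i, ∑ k ∈ Finset.range (min n (m i)), s i (o i k) with hd1
  set d2 := ∑ i, ∑ j ∈ Finset.Ico n (m i), s i (o i j) with hd2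
  have hsplit : SW s OPT = d1 + d2 := by
    rw [SW, hd1, hd2, ← Finset.sum_add_distrib]
    refine Finset.sum_congr rfl fun i _ => ?_
    rw [henum i, Finset.range_eq_Ico,
      ← Finset.sum_Ico_consecutive (fun j => s i (o i j)) (Nat.zero_le _)
        (min_le_right n (m i))]
    congr 1
    · rw [Finset.range_eq_Ico]
    rcases le_total n (m i) with h | h
    · rw [min_eq_left h]
    · rw [min_eq_right h, Finset.Ico_self, Finset.Ico_eq_empty (by omega)]
  choose! p hp1 hp2 hp3 using hblock
  -- bound d2
  have hbound : d2 ≤ (n : NNReal) * SW s A := by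
    rw [hd2, SW, Finset.mul_sum]
    refine Finset.sum_le_sum fun i _ => ?_
    -- interval decomposition
    set I : ℕ → Finset ℕ := fun k => Finset.Ico ((k+1)*n) (min ((k+2)*n) (m i)) with hI
    have hdisj : ∀ a b : ℕ, a < b → Disjoint (I a) (I b) := by
      intro a b hab
      rw [Finset.disjoint_left]
      intro x hxa hxb
      rw [hI, Finset.mem_Ico] at hxa hxb
      have h1 : (a+2)*n ≤ (b+1)*n := Nat.mul_le_mul_right n (by omega)
      omega
    have hU : Finset.Ico n (m i) = (Finset.range (m i / n)).biUnion I := by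
      ext j
      simp only [Finset.mem_Ico, Finset.mem_biUnion, Finset.mem_range, hI]
      constructor
      · rintro ⟨hnj, hjm⟩
        have h1 : 1 ≤ j / n := (Nat.one_le_div_iff hn).mpr hnj
        refine ⟨j / n - 1, ?_, ?_, ?_⟩
        · have : j / n ≤ m i / n := Nat.div_le_div_right (le_of_lt hjm)
          omega
        · have : (j / n) * n ≤ j := Nat.div_mul_le_self j n
          have he : (j / n - 1 + 1) = j / n := by omega
          rw [he]; exact this
        · have h2 : j < (j / n + 1) * n := by
            have h := Nat.lt_mul_div_succ j hn
            rw [Nat.mul_comm] at h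
            exact h
          have he : (j / n - 1 + 2) = j / n + 1 := by omega
          rw [he]; omega
      · rintro ⟨k, hk, h1, h2⟩
        have : n ≤ (k+1)*n := Nat.le_mul_of_pos_left n (by omega)
        omega
    rw [hU, Finset.sum_biUnion (fun a _ b _ hab => by
      rcases lt_or_gt_of_ne hab with h | h
      · exact hdisj a b h
      · exact (hdisj b a h).symm)]
    have hpk_lt : ∀ k, k < m i / n → p i k < m i := by
      intro k hk
      have h1 : (k+1) ≤ m i / n := hk
      have h2 : (k+1) * n ≤ (m i / n) * n := Nat.mul_le_mul_right n h1
      have h3 : (m i / n) * n ≤ m i := Nat.div_mul_le_self _ _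
      have := hp2 i k hk
      omega
    calc ∑ k ∈ Finset.range (m i / n), ∑ j ∈ I k, s i (o i j)
        ≤ ∑ k ∈ Finset.range (m i / n), (n : NNReal) * s i (o i (p i k)) := by
          refine Finset.sum_le_sum fun k hk => ?_
          have hk' := Finset.mem_range.mp hk
          have hcard : (I k).card ≤ n := by
            rw [hI, Nat.card_Ico]
            have : min ((k+2)*n) (m i) ≤ (k+2)*n := min_le_left _ _
            have h2 : (k+1)*n + n = (k+2)*n := by ring
            omega
          have hle : ∀ j ∈ I k, s i (o i j) ≤ s i (o i (p i k)) := by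
            intro j hj
            rw [hI, Finset.mem_Ico] at hj
            have hmm : m i = #(OPT i) := rfl
            refine ho_sorted i (p i k) j ?_ (by omega)
            have := hp2 i k hk'
            omega
          calc ∑ j ∈ I k, s i (o i j) ≤ (I k).card • s i (o i (p i k)) :=
                Finset.sum_le_card_nsmul _ _ _ hle
            _ ≤ n • s i (o i (p i k)) := by
                exact nsmul_le_nsmul_left (by positivity) hcard
            _ = (n : NNReal) * s i (o i (p i k)) := by
                rw [nsmul_eq_mul]
      _ = (n : NNReal) * ∑ k ∈ Finset.range (m i / n), s i (o i (p i k)) := by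
          rw [Finset.mul_sum]
      _ ≤ (n : NNReal) * ∑ g ∈ A i, s i g := by
          refine mul_le_mul_right ?_ _
          have hinj : Set.InjOn (fun k => o i (p i k)) (Finset.range (m i / n)) := by
            intro a ha b hb hab
            simp only [Finset.coe_sort_coe, Finset.mem_coe, Finset.mem_range] at ha hb
            have h1 := ho_inj i (p i a) (p i b) (hpk_lt a ha) (hpk_lt b hb) hab
            have h2 := hp1 i a ha; have h3 := hp2 i a ha
            have h4 := hp1 i b hb; have h5 := hp2 i b hb
            by_contra hne
            rcases lt_or_gt_of_ne hne with h | h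
            · have : (a+1)*n ≤ b*n := Nat.mul_le_mul_right n (by omega)
              omega
            · have : (b+1)*n ≤ a*n := Nat.mul_le_mul_right n (by omega)
              omega
          rw [← Finset.sum_image (fun a ha b hb hab => hinj ha hb hab)]
          refine Finset.sum_le_sum_of_subset ?_
          intro g hg
          simp only [Finset.mem_image, Finset.mem_range] at hg
          obtain ⟨k, hk, rfl⟩ := hg
          exact hp3 i k hk
  have h12 : d1 ≤ d2 := by
    have h := hδ
    rw [hsplit] at h
    have : d1 + d1 ≤ d1 + d2 := by
      calc d1 + d1 = 2 * d1 := by ring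
        _ ≤ d1 + d2 := h
    exact le_of_add_le_add_left this
  calc SW s OPT = d1 + d2 := hsplit
    _ ≤ d2 + d2 := add_le_add_left h12 _
    _ = 2 * d2 := by ring
    _ ≤ 2 * ((n : NNReal) * SW s A) := by exact mul_le_mul_right hbound _
    _ = ((2 * n : ℕ) : NNReal) * SW s A := by push_cast; ring
end

section
/- Let A = (A_1,…,A_n) be a partial allocation (pairwise disjoint bundles, not necessarily covering G) that is EF1, and let σ be a permutation of the agents that is a topological order of the envy-graph of A, i.e., v_{σ(j)}(A_{σ(j)}) ≥ v_{σ(j)}(A_{σ(j')}) whenever j' < j. Let x_1,…,x_n be n distinct unallocated goods (x_i ∉ A_1 ∪ … ∪ A_n), assigned so that agent i receives x_i, and suppose the assignment respects round-robin picking in the order σ, i.e., v_{σ(j)}(x_{σ(j)}) ≥ v_{σ(j)}(x_{σ(j')}) for all j < j'. Then the partial allocation A' with A'_i = A_i ∪ {x_i} for every i is EF1. -/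
open Finset

/-- A partial allocation: pairwise disjoint bundles (not necessarily covering all goods). -/
def IsPartialAllocation {n : ℕ} {G : Type} (A : Fin n → Finset G) : Prop :=
  ∀ i j, i ≠ j → Disjoint (A i) (A j)

/-- If a partial allocation `A` is EF1, `σ` is a topological order of its envy-graph, and
distinct unallocated goods `x 1, …, x n` are given one per agent respecting round-robin
picking in the order `σ`, then the resulting partial allocation (adding `x i` to `A i`)
is still EF1. -/
theorem round_preserves_EF1 (n : ℕ) (G : Type) [DecidableEq G]
    (v : Fin n → G → NNReal)
    (A : Fin n → Finset G) (hA : IsPartialAllocation A)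
    (hEF1 : EF1 v A)
    (σ : Equiv.Perm (Fin n))
    (htop : ∀ j j' : Fin n, j' < j →
      ∑ g ∈ A (σ j'), v (σ j) g ≤ ∑ g ∈ A (σ j), v (σ j) g)
    (x : Fin n → G) (hxinj : Function.Injective x)
    (hxfree : ∀ i j, x i ∉ A j)
    (hRR : ∀ j j' : Fin n, j < j' → v (σ j) (x (σ j')) ≤ v (σ j) (x (σ j))) :
    EF1 v (fun i => insert (x i) (A i)) := by
  intro i j
  right
  by_cases hij : i = j
  · subst hij
    exact ⟨x i, mem_insert_self _ _, by
      rw [Finset.erase_insert (hxfree i i)]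
      exact Finset.sum_le_sum_of_subset (Finset.subset_insert _ _)⟩
  · have hσ : σ.symm i ≠ σ.symm j := fun h => hij (by simpa using congrArg σ h)
    rcases lt_or_gt_of_ne hσ with h | h
    · -- i picks before j
      rcases hEF1 i j with hj | ⟨g, hg, hle⟩
      · refine ⟨x j, mem_insert_self _ _, ?_⟩
        simp [hj]
      · have hgx : x j ≠ g := fun h => hxfree j j (by rw [h]; exact hg)
        refine ⟨g, Finset.mem_insert_of_mem hg, ?_⟩
        rw [Finset.erase_insert_of_ne hgx,
          Finset.sum_insert (fun hmem => hxfree j j (Finset.mem_of_mem_erase hmem)),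
          Finset.sum_insert (hxfree i i)]
        have hRR' := hRR (σ.symm i) (σ.symm j) h
        simp only [Equiv.apply_symm_apply] at hRR'
        exact add_le_add hRR' hle
    · -- j picks before i: i does not envy A j by the topological order
      refine ⟨x j, mem_insert_self _ _, ?_⟩
      rw [Finset.erase_insert (hxfree j j)]
      have htop' := htop (σ.symm i) (σ.symm j) h
      simp only [Equiv.apply_symm_apply] at htop'
      exact htop'.trans (Finset.sum_le_sum_of_subset (Finset.subset_insert _ _))
end

section
/- Let q = ⌊m/n⌋. For each agent i, enumerate the goods as g_i^1,…,g_i^m with v_i(g_i^1) ≥ … ≥ v_i(g_i^m), and let G_i^h = {g_i^{(h−1)n+1},…,g_i^{hn}} for h ∈ [q]. If A is an allocation in which every agent i receives at least q goods and there exist goods x_1,…,x_q ∈ A_i with x_h ∈ G_i^h for each h ∈ [q], then A is epistemic EF1. -/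
open Finset

/-- number of non-`S` goods strictly before `g` in the ranking `r`. -/
private def cnt {G : Type} [DecidableEq G] (f : ℕ → G) (S : Finset G) (r : G → ℕ) (g : G) : ℕ :=
  ((Finset.range (r g)).filter (fun k => f k ∉ S)).card

private lemma cnt_succ_le {G : Type} [DecidableEq G] {f : ℕ → G} {S : Finset G} {r : G → ℕ}
    (hr1 : ∀ g, f (r g) = g) {g : G} (hg : g ∉ S) {N : ℕ} (hlt : r g < N) :
    cnt f S r g + 1 ≤ ((Finset.range N).filter (fun k => f k ∉ S)).card := by
  have hsub : insert (r g) ((Finset.range (r g)).filter (fun k => f k ∉ S)) ⊆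
      (Finset.range N).filter (fun k => f k ∉ S) := by
    intro k hk
    rcases Finset.mem_insert.mp hk with h | h
    · subst h
      exact Finset.mem_filter.mpr ⟨Finset.mem_range.mpr hlt, by rw [hr1 g]; exact hg⟩
    · rcases Finset.mem_filter.mp h with ⟨h1, h2⟩
      exact Finset.mem_filter.mpr ⟨Finset.mem_range.mpr
        (lt_trans (Finset.mem_range.mp h1) hlt), h2⟩
  have h2 := Finset.card_le_card hsub
  rw [Finset.card_insert_of_notMem (by simp)] at h2
  simpa [cnt] using h2

private lemma cnt_mono {G : Type} [DecidableEq G] {f : ℕ → G} {S : Finset G} {r : G → ℕ}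
    (hr1 : ∀ g, f (r g) = g) {g g' : G} (hg : g ∉ S) (hlt : r g < r g') :
    cnt f S r g < cnt f S r g' := by
  have h := cnt_succ_le hr1 hg hlt
  simp only [cnt] at *
  omega

private lemma cnt_lt {G : Type} [Fintype G] [DecidableEq G] {f : ℕ → G} {S : Finset G}
    {r : G → ℕ}
    (hfinj : ∀ k l, k < Fintype.card G → l < Fintype.card G → f k = f l → k = l)
    (hrlt : ∀ g, r g < Fintype.card G) (hr1 : ∀ g, f (r g) = g)
    {g : G} (hg : g ∉ S) : cnt f S r g < Fintype.card G - S.card := by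
  have hmaps : ∀ k ∈ (Finset.range (r g)).filter (fun k => f k ∉ S),
      f k ∈ (univ \ S).erase g := by
    intro k hk
    rcases Finset.mem_filter.mp hk with ⟨h1, h2⟩
    have hklt : k < Fintype.card G := lt_trans (Finset.mem_range.mp h1) (hrlt g)
    refine Finset.mem_erase.mpr ⟨?_, Finset.mem_sdiff.mpr ⟨Finset.mem_univ _, h2⟩⟩
    intro hfk
    have hk' : k = r g := hfinj k (r g) hklt (hrlt g) (by rw [hfk, hr1])
    have := Finset.mem_range.mp h1
    omega
  have hinjon : Set.InjOn f ((Finset.range (r g)).filter (fun k => f k ∉ S) : Finset ℕ) := by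
    intro k hk l hl hkl
    have hk1 : k < Fintype.card G :=
      lt_trans (Finset.mem_range.mp (Finset.mem_filter.mp hk).1) (hrlt g)
    have hl1 : l < Fintype.card G :=
      lt_trans (Finset.mem_range.mp (Finset.mem_filter.mp hl).1) (hrlt g)
    exact hfinj k l hk1 hl1 hkl
  have hcard := Finset.card_le_card_of_injOn f hmaps hinjon
  have hgmem : g ∈ univ \ S := Finset.mem_sdiff.mpr ⟨Finset.mem_univ _, hg⟩
  have he : ((univ \ S).erase g).card = (univ \ S).card - 1 := Finset.card_erase_of_mem hgmem
  have hd : (univ \ S : Finset G).card = Fintype.card G - S.card := by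
    rw [Finset.card_sdiff_of_subset (Finset.subset_univ S), Finset.card_univ]
  have hpos : 1 ≤ (univ \ S : Finset G).card := Finset.card_pos.mpr ⟨g, hgmem⟩
  simp only [cnt]
  omega

private lemma cnt_rank {G : Type} [DecidableEq G] {f : ℕ → G} {S : Finset G} {r : G → ℕ}
    {n : ℕ} (hn : 1 ≤ n)
    (hr1 : ∀ g, f (r g) = g) {jf : ℕ → ℕ} {t : ℕ} (_ht : 1 ≤ t)
    (hjf : ∀ h, h < t → h * n ≤ jf h ∧ jf h < (h + 1) * n ∧ f (jf h) ∈ S)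
    {g : G} (hg : g ∉ S) (hc : t * (n - 1) ≤ cnt f S r g) : t * n ≤ r g := by
  by_contra hlt
  push_neg at hlt
  have h1 : cnt f S r g + 1 ≤ ((Finset.range (t * n)).filter (fun k => f k ∉ S)).card :=
    cnt_succ_le hr1 hg hlt
  -- the ranks jf 0, ..., jf (t-1) are t distinct members of S inside range (t*n)
  have hjfinj : Set.InjOn jf (Finset.range t : Finset ℕ) := by
    have key : ∀ a b, a < b → b < t → jf a ≠ jf b := by
      intro a b hab hbt heq
      have h2 := (hjf a (lt_trans hab hbt)).2.1
      have h3 := (hjf b hbt).1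
      have h4 : (a + 1) * n ≤ b * n := Nat.mul_le_mul_right n (by omega)
      omega
    intro a ha b hb heq
    simp only [Finset.coe_range, Set.mem_Iio] at ha hb
    rcases lt_trichotomy a b with h | h | h
    · exact absurd heq (key a b h hb)
    · exact h
    · exact absurd heq.symm (key b a h ha)
  have hsub : (Finset.range t).image jf ⊆ (Finset.range (t * n)).filter (fun k => f k ∈ S) := by
    intro k hk
    obtain ⟨h2, hh, rfl⟩ := Finset.mem_image.mp hk
    have hht := Finset.mem_range.mp hh
    have hb1 := (hjf h2 hht).2.1
    have hb2 := (hjf h2 hht).2.2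
    have : (h2 + 1) * n ≤ t * n := Nat.mul_le_mul_right n (by omega)
    exact Finset.mem_filter.mpr ⟨Finset.mem_range.mpr (by omega), hb2⟩
  have h2 : t ≤ ((Finset.range (t * n)).filter (fun k => f k ∈ S)).card := by
    have := Finset.card_le_card hsub
    rwa [Finset.card_image_of_injOn hjfinj, Finset.card_range] at this
  have h3 : ((Finset.range (t * n)).filter (fun k => f k ∈ S)).card +
      ((Finset.range (t * n)).filter (fun k => f k ∉ S)).card = t * n := by
    rw [Finset.card_filter_add_card_filter_not, Finset.card_range]
  have h4 : t * (n - 1) + t = t * n := by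
    have hne : n - 1 + 1 = n := by omega
    calc t * (n - 1) + t = t * ((n - 1) + 1) := by ring
      _ = t * n := by rw [hne]
  omega

/-- Let `q = ⌊m/n⌋` where `m` is the number of goods. For each agent `i`, `gi i` enumerates
the goods in order of weakly decreasing value `v i`, and the `h`-th block (`h < q`,
0-indexed) of agent `i` consists of the goods `gi i j` for `h*n ≤ j < (h+1)*n`. If in the
allocation `A` every agent receives at least `q` goods, among which one from each of her
`q` blocks, then `A` is epistemic EF1. -/
theorem sufficient_epistemic_EF1 (n : ℕ) (hn : 0 < n) (G : Type) [Fintype G] [DecidableEq G]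
    (v : Fin n → G → NNReal)
    (gi : Fin n → ℕ → G)
    (hinj : ∀ i k l, k < Fintype.card G → l < Fintype.card G → gi i k = gi i l → k = l)
    (hsorted : ∀ i k l, k ≤ l → l < Fintype.card G → v i (gi i l) ≤ v i (gi i k))
    (A : Fin n → Finset G) (hA : IsAllocation A)
    (hq : ∀ i, Fintype.card G / n ≤ (A i).card)
    (hblocks : ∀ i, ∀ h < Fintype.card G / n,
      ∃ j, h * n ≤ j ∧ j < (h + 1) * n ∧ gi i j ∈ A i) :
    EpistemicEF1 v A := by
  classical
  intro i
  rcases Nat.lt_or_ge n 2 with hn2 | hn2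
  -- trivial case n = 1
  · refine ⟨A, hA, rfl, ?_⟩
    intro j
    have hji : j = i := by
      have h1 := j.isLt
      have h2 := i.isLt
      apply Fin.ext
      omega
    subst hji
    rcases (A j).eq_empty_or_nonempty with he | ⟨g, hg⟩
    · exact Or.inl he
    · exact Or.inr ⟨g, hg, Finset.sum_le_sum_of_subset (Finset.erase_subset _ _)⟩
  -- main case n ≥ 2
  have hn1 : 0 < n - 1 := by omega
  -- rank function r
  have hsurj : ∀ g : G, ∃ k, k < Fintype.card G ∧ gi i k = g := by
    have hbij : Function.Bijective (fun k : Fin (Fintype.card G) => gi i k.val) := by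
      rw [Fintype.bijective_iff_injective_and_card]
      exact ⟨fun k l h => Fin.ext (hinj i k l k.isLt l.isLt h), by simp⟩
    intro g
    obtain ⟨k, hk⟩ := hbij.2 g
    exact ⟨k.val, k.isLt, hk⟩
  choose r hrlt hr1 using hsurj
  have hrinj : ∀ g g', r g = r g' → g = g' := by
    intro g g' h
    rw [← hr1 g, ← hr1 g', h]
  have hcnt_inj : ∀ g g', g ∉ A i → g' ∉ A i →
      cnt (gi i) (A i) r g = cnt (gi i) (A i) r g' → g = g' := by
    intro g g' hg hg' h
    rcases lt_trichotomy (r g) (r g') with h1 | h1 | h1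
    · exact absurd h (Nat.ne_of_lt (cnt_mono hr1 hg h1))
    · exact hrinj _ _ h1
    · exact absurd h.symm (Nat.ne_of_lt (cnt_mono hr1 hg' h1))
  -- block representatives
  obtain ⟨jf, hjf⟩ : ∃ jf : ℕ → ℕ, ∀ h, h < Fintype.card G / n →
      h * n ≤ jf h ∧ jf h < (h + 1) * n ∧ gi i (jf h) ∈ A i := by
    refine ⟨fun h => if hh : h < Fintype.card G / n then (hblocks i h hh).choose else 0, ?_⟩
    intro h hh
    simp only [dif_pos hh]
    exact (hblocks i h hh).choose_spec
  have hjfinj : ∀ a b, a < Fintype.card G / n → b < Fintype.card G / n → jf a = jf b → a = b := by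
    have key : ∀ a b, a < b → b < Fintype.card G / n → jf a ≠ jf b := by
      intro a b hab hbt heq
      have h2 := (hjf a (lt_trans hab hbt)).2.1
      have h3 := (hjf b hbt).1
      have h4 : (a + 1) * n ≤ b * n := Nat.mul_le_mul_right n (by omega)
      omega
    intro a b ha hb heq
    rcases lt_trichotomy a b with h | h | h
    · exact absurd heq (key a b h hb)
    · exact h
    · exact absurd heq.symm (key b a h ha)
  -- arithmetic facts
  have hql : (Fintype.card G / n) * n ≤ Fintype.card G := Nat.div_mul_le_self _ _
  have hqu : Fintype.card G < (Fintype.card G / n) * n + n := by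
    have h1 := Nat.div_add_mod (Fintype.card G) n
    have h2 := Nat.mod_lt (Fintype.card G) hn
    have h3 : n * (Fintype.card G / n) = (Fintype.card G / n) * n := Nat.mul_comm _ _
    omega
  have hMq : Fintype.card G - (A i).card ≤ (Fintype.card G / n + 1) * (n - 1) := by
    have h1 := hq i
    have h2 : (A i).card ≤ Fintype.card G := Finset.card_le_univ (A i)
    have e1 : (Fintype.card G / n + 1) * (n - 1) + (Fintype.card G / n + 1)
        = (Fintype.card G / n + 1) * n := by
      have hne : n - 1 + 1 = n := by omega
      calc (Fintype.card G / n + 1) * (n - 1) + (Fintype.card G / n + 1)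
          = (Fintype.card G / n + 1) * ((n - 1) + 1) := by ring
        _ = (Fintype.card G / n + 1) * n := by rw [hne]
    have e2 : (Fintype.card G / n + 1) * n = (Fintype.card G / n) * n + n := by ring
    omega
  -- assignment of goods outside A i to the other agents
  obtain ⟨a, hane, hamod⟩ : ∃ a : G → Fin n, (∀ g, a g ≠ i) ∧
      ∀ g g', a g = a g' →
        cnt (gi i) (A i) r g % (n - 1) = cnt (gi i) (A i) r g' % (n - 1) := by
    refine ⟨fun g => if h : cnt (gi i) (A i) r g % (n - 1) < i.val then
        ⟨cnt (gi i) (A i) r g % (n - 1), lt_trans h i.isLt⟩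
      else ⟨cnt (gi i) (A i) r g % (n - 1) + 1, by
        have := Nat.mod_lt (cnt (gi i) (A i) r g) hn1
        omega⟩, ?_, ?_⟩
    · intro g
      dsimp only
      split_ifs with h
      · intro he
        have := congrArg Fin.val he
        simp only at this
        omega
      · intro he
        have := congrArg Fin.val he
        simp only at this
        omega
    · intro g g' he
      dsimp only at he
      split_ifs at he with h1 h2 h2 <;>
      · have := congrArg Fin.val he
        simp only at this
        omega
  refine ⟨fun j => if j = i then A i else (univ \ A i).filter (fun g => a g = j),
    ⟨?_, ?_⟩, by simp, ?_⟩
  -- disjointness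
  · intro j j' hne
    dsimp only
    by_cases h1 : j = i <;> by_cases h2 : j' = i
    · exact absurd (h1.trans h2.symm) hne
    · subst h1
      rw [if_pos rfl, if_neg h2, Finset.disjoint_left]
      intro g hg hgin
      exact (Finset.mem_sdiff.mp (Finset.mem_filter.mp hgin).1).2 hg
    · subst h2
      rw [if_pos rfl, if_neg h1, Finset.disjoint_right]
      intro g hg hgin
      exact (Finset.mem_sdiff.mp (Finset.mem_filter.mp hgin).1).2 hg
    · rw [if_neg h1, if_neg h2, Finset.disjoint_left]
      intro g hg hg'
      have e1 := (Finset.mem_filter.mp hg).2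
      have e2 := (Finset.mem_filter.mp hg').2
      exact hne (by rw [← e1, ← e2])
  -- coverage
  · intro g
    by_cases hg : g ∈ A i
    · exact ⟨i, by simp [hg]⟩
    · refine ⟨a g, ?_⟩
      dsimp only
      rw [if_neg (hane g)]
      exact Finset.mem_filter.mpr ⟨Finset.mem_sdiff.mpr ⟨Finset.mem_univ g, hg⟩, rfl⟩
  -- EF1 certificate property
  · intro j
    dsimp only
    rw [if_pos rfl]
    by_cases hji : j = i
    · subst hji
      rw [if_pos rfl]
      rcases (A j).eq_empty_or_nonempty with he | ⟨g, hg⟩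
      · exact Or.inl he
      · exact Or.inr ⟨g, hg, Finset.sum_le_sum_of_subset (Finset.erase_subset _ _)⟩
    rw [if_neg hji]
    set T := (univ \ A i).filter (fun g => a g = j) with hT
    rcases T.eq_empty_or_nonempty with he | hne
    · exact Or.inl he
    right
    obtain ⟨gs, hgs, hmin⟩ := T.exists_min_image (cnt (gi i) (A i) r) hne
    refine ⟨gs, hgs, ?_⟩
    have hmemT : ∀ g ∈ T, g ∉ A i ∧ a g = j := by
      intro g hg
      have h := Finset.mem_filter.mp hg
      exact ⟨(Finset.mem_sdiff.mp h.1).2, h.2⟩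
    obtain ⟨hgsS, hgsa⟩ := hmemT gs hgs
    -- key structural fact about the other goods of agent j
    have hkey : ∀ g ∈ T.erase gs, ∃ t, 1 ≤ t ∧ t ≤ Fintype.card G / n ∧
        cnt (gi i) (A i) r g = cnt (gi i) (A i) r gs + t * (n - 1) := by
      intro g hg
      obtain ⟨hne', hgT⟩ := Finset.mem_erase.mp hg
      obtain ⟨hgS, hga⟩ := hmemT g hgT
      have hmod : cnt (gi i) (A i) r gs % (n - 1) = cnt (gi i) (A i) r g % (n - 1) :=
        hamod gs g (by rw [hgsa, hga])
      have hle : cnt (gi i) (A i) r gs ≤ cnt (gi i) (A i) r g := hmin g hgT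
      have hnecnt : cnt (gi i) (A i) r g ≠ cnt (gi i) (A i) r gs := by
        intro h
        exact hne' (hcnt_inj g gs hgS hgsS h)
      obtain ⟨d, hd⟩ := (Nat.modEq_iff_dvd' hle).mp hmod
      have hd1 : 1 ≤ d := by
        rcases Nat.eq_zero_or_pos d with rfl | h
        · simp at hd; omega
        · exact h
      have hcomm : (n - 1) * d = d * (n - 1) := Nat.mul_comm _ _
      have heq : cnt (gi i) (A i) r g = cnt (gi i) (A i) r gs + d * (n - 1) := by omega
      have hdq : d ≤ Fintype.card G / n := by
        by_contra hcon
        push_neg at hcon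
        have h5 : (Fintype.card G / n + 1) * (n - 1) ≤ d * (n - 1) :=
          Nat.mul_le_mul_right _ (by omega)
        have h6 := cnt_lt (hinj i) hrlt hr1 hgS
        omega
      exact ⟨d, hd1, hdq, heq⟩
    -- the comparison map into blocks
    have hstep : ∀ g ∈ T.erase gs,
        (cnt (gi i) (A i) r g - cnt (gi i) (A i) r gs) / (n - 1) - 1 < Fintype.card G / n ∧
        v i g ≤ v i (gi i (jf ((cnt (gi i) (A i) r g - cnt (gi i) (A i) r gs) / (n - 1) - 1))) := by
      intro g hg
      obtain ⟨t, ht1, htq, heq⟩ := hkey g hg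
      obtain ⟨hne', hgT⟩ := Finset.mem_erase.mp hg
      obtain ⟨hgS, hga⟩ := hmemT g hgT
      have hdiv : (cnt (gi i) (A i) r g - cnt (gi i) (A i) r gs) / (n - 1) = t := by
        rw [heq, Nat.add_sub_cancel_left, Nat.mul_div_cancel t hn1]
      have htq' : t - 1 < Fintype.card G / n := by omega
      have hrk : t * n ≤ r g := by
        refine cnt_rank (by omega) hr1 ht1 (fun h hh => hjf h (by omega)) hgS ?_
        omega
      have hjb := (hjf (t - 1) htq').2.1
      have hjr : jf (t - 1) ≤ r g := by
        have hne : t - 1 + 1 = t := by omega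
        rw [hne] at hjb
        omega
      refine ⟨by omega, ?_⟩
      calc v i g = v i (gi i (r g)) := by rw [hr1]
        _ ≤ v i (gi i (jf (t - 1))) := hsorted i _ _ hjr (hrlt g)
        _ = v i (gi i (jf ((cnt (gi i) (A i) r g - cnt (gi i) (A i) r gs) / (n - 1) - 1))) := by
            rw [hdiv]
    -- injectivity of the comparison map
    have hφinj : ∀ g ∈ T.erase gs, ∀ g' ∈ T.erase gs,
        (cnt (gi i) (A i) r g - cnt (gi i) (A i) r gs) / (n - 1) - 1 =
        (cnt (gi i) (A i) r g' - cnt (gi i) (A i) r gs) / (n - 1) - 1 → g = g' := by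
      intro g hg g' hg' he
      obtain ⟨t, ht1, htq, heq⟩ := hkey g hg
      obtain ⟨t', ht1', htq', heq'⟩ := hkey g' hg'
      have hdiv : (cnt (gi i) (A i) r g - cnt (gi i) (A i) r gs) / (n - 1) = t := by
        rw [heq, Nat.add_sub_cancel_left, Nat.mul_div_cancel t hn1]
      have hdiv' : (cnt (gi i) (A i) r g' - cnt (gi i) (A i) r gs) / (n - 1) = t' := by
        rw [heq', Nat.add_sub_cancel_left, Nat.mul_div_cancel t' hn1]
      rw [hdiv, hdiv'] at he
      have htt : t = t' := by omega
      have hcc : cnt (gi i) (A i) r g = cnt (gi i) (A i) r g' := by rw [heq, heq', htt]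
      exact hcnt_inj g g' ((hmemT g (Finset.mem_erase.mp hg).2).1)
        ((hmemT g' (Finset.mem_erase.mp hg').2).1) hcc
    -- final chain of inequalities
    calc ∑ g' ∈ T.erase gs, v i g'
        ≤ ∑ g' ∈ T.erase gs,
            v i (gi i (jf ((cnt (gi i) (A i) r g' - cnt (gi i) (A i) r gs) / (n - 1) - 1))) :=
          Finset.sum_le_sum (fun g hg => (hstep g hg).2)
      _ = ∑ h ∈ (T.erase gs).image
            (fun g => (cnt (gi i) (A i) r g - cnt (gi i) (A i) r gs) / (n - 1) - 1),
            v i (gi i (jf h)) := (Finset.sum_image (f := fun h => v i (gi i (jf h))) hφinj).symm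
      _ ≤ ∑ h ∈ Finset.range (Fintype.card G / n), v i (gi i (jf h)) := by
          apply Finset.sum_le_sum_of_subset
          intro h hh
          obtain ⟨g, hg, rfl⟩ := Finset.mem_image.mp hh
          exact Finset.mem_range.mpr (hstep g hg).1
      _ = ∑ g' ∈ (Finset.range (Fintype.card G / n)).image (fun h => gi i (jf h)), v i g' := by
          refine (Finset.sum_image ?_).symm
          intro h1 hh1 h2 hh2 heq
          have hlt1 := Finset.mem_range.mp hh1
          have hlt2 := Finset.mem_range.mp hh2
          have hb1 := (hjf h1 (Finset.mem_range.mp hh1)).2.1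
          have hb2 := (hjf h2 (Finset.mem_range.mp hh2)).2.1
          have hm1 : (h1 + 1) * n ≤ (Fintype.card G / n) * n :=
            Nat.mul_le_mul_right n (by omega)
          have hm2 : (h2 + 1) * n ≤ (Fintype.card G / n) * n :=
            Nat.mul_le_mul_right n (by omega)
          exact hjfinj h1 h2 (Finset.mem_range.mp hh1) (Finset.mem_range.mp hh2)
            (hinj i _ _ (by omega) (by omega) heq)
      _ ≤ ∑ g' ∈ A i, v i g' := by
          apply Finset.sum_le_sum_of_subset
          intro g hg
          obtain ⟨h, hh, rfl⟩ := Finset.mem_image.mp hg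
          exact (hjf h (Finset.mem_range.mp hh)).2.2
end

section
/- Let OPT be an allocation maximizing the utilitarian social welfare (SW(OPT) = opt). If agent i sa-envies agent j in OPT, i.e., v_i(OPT_i) < v_i(OPT_j) and s_i(OPT_j) ≥ s_j(OPT_j), then s_i(g) = s_j(g) for every good g ∈ OPT_j. -/
open Finset

/-- In an allocation `OPT` maximizing the utilitarian social welfare, if agent `i`
sa-envies agent `j` (i.e. `v i (OPT i) < v i (OPT j)` and `s i (OPT j) ≥ s j (OPT j)`),
then `s i g = s j g` for every good `g ∈ OPT j`. -/
theorem sa_envy_equal_impact_items (n : ℕ) (G : Type) [Fintype G] [DecidableEq G]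
    (v s : Fin n → G → NNReal)
    (OPT : Fin n → Finset G) (hOPT : IsAllocation OPT)
    (hopt : ∀ B : Fin n → Finset G, IsAllocation B → SW s B ≤ SW s OPT)
    (i j : Fin n)
    (henvy : ∑ g ∈ OPT i, v i g < ∑ g ∈ OPT j, v i g)
    (hsa : ∑ g ∈ OPT j, s j g ≤ ∑ g ∈ OPT j, s i g) :
    ∀ g ∈ OPT j, s i g = s j g := by
  have hij : i ≠ j := by
    intro h; subst h; exact lt_irrefl _ henvy
  have hdisj : ∀ p q : Fin n, p ≠ q → ∀ x, x ∈ OPT p → x ∈ OPT q → False :=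
    fun p q hpq x hp hq => Finset.disjoint_left.mp (hOPT.1 p q hpq) hp hq
  -- Key: for each g ∈ OPT j, moving g to agent i cannot increase welfare,
  -- hence s i g ≤ s j g.
  have key : ∀ g ∈ OPT j, s i g ≤ s j g := by
    intro g hg
    have hgi : g ∉ OPT i := fun h => hdisj i j hij g h hg
    set B : Fin n → Finset G := fun k =>
      if k = i then insert g (OPT i) else if k = j then (OPT j).erase g else OPT k with hB
    have hBmem : ∀ (k : Fin n) (x : G), x ∈ B k →
        (k = i ∧ (x = g ∨ x ∈ OPT i)) ∨ (x ∈ OPT k ∧ x ≠ g) := by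
      intro k x hx
      simp only [hB] at hx
      by_cases hki : k = i
      · rw [if_pos hki] at hx
        exact Or.inl ⟨hki, Finset.mem_insert.mp hx⟩
      · rw [if_neg hki] at hx
        by_cases hkj : k = j
        · rw [if_pos hkj] at hx
          rw [Finset.mem_erase] at hx
          exact Or.inr ⟨hkj ▸ hx.2, hx.1⟩
        · rw [if_neg hkj] at hx
          refine Or.inr ⟨hx, ?_⟩
          rintro rfl
          exact hdisj k j hkj x hx hg
    have hBalloc : IsAllocation B := by
      constructor
      · intro a b hab
        rw [Finset.disjoint_left]
        intro x hxa hxb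
        rcases hBmem a x hxa with ⟨hai, hxa'⟩ | ⟨hxa', hxga⟩ <;>
          rcases hBmem b x hxb with ⟨hbi, hxb'⟩ | ⟨hxb', hxgb⟩
        · exact hab (hai.trans hbi.symm)
        · rcases hxa' with rfl | hxa'
          · exact hxgb rfl
          · exact hdisj i b (fun h => hab (hai.trans h)) x hxa' hxb'
        · rcases hxb' with rfl | hxb'
          · exact hxga rfl
          · exact hdisj a i (fun h => hab (h.trans hbi.symm)) x hxa' hxb'
        · exact hdisj a b hab x hxa' hxb'
      · intro x
        obtain ⟨k, hk⟩ := hOPT.2 x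
        by_cases hki : k = i
        · refine ⟨i, ?_⟩
          simp only [hB, if_pos rfl]
          exact Finset.mem_insert_of_mem (hki ▸ hk)
        by_cases hkj : k = j
        · by_cases hx : x = g
          · refine ⟨i, ?_⟩
            simp only [hB, if_pos rfl]
            exact hx ▸ Finset.mem_insert_self g (OPT i)
          · refine ⟨j, ?_⟩
            simp only [hB, if_neg (Ne.symm hij), if_pos rfl]
            exact Finset.mem_erase.mpr ⟨hx, hkj ▸ hk⟩
        · refine ⟨k, ?_⟩
          simp only [hB, if_neg hki, if_neg hkj]
          exact hk
    have hsw : SW s B + s j g = SW s OPT + s i g := by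
      unfold SW
      have h1 : (∑ k, ∑ x ∈ B k, s k x) + s j g
          = ∑ k : Fin n, ((∑ x ∈ B k, s k x) + if k = j then s j g else 0) := by
        rw [Finset.sum_add_distrib, Finset.sum_ite_eq' Finset.univ j (fun _ => s j g),
          if_pos (Finset.mem_univ j)]
      have h2 : (∑ k, ∑ x ∈ OPT k, s k x) + s i g
          = ∑ k : Fin n, ((∑ x ∈ OPT k, s k x) + if k = i then s i g else 0) := by
        rw [Finset.sum_add_distrib, Finset.sum_ite_eq' Finset.univ i (fun _ => s i g),
          if_pos (Finset.mem_univ i)]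
      rw [h1, h2]
      apply Finset.sum_congr rfl
      intro k _
      by_cases hki : k = i
      · obtain rfl := hki.symm
        rw [if_neg hij, if_pos rfl]
        simp only [hB, if_pos rfl]
        rw [Finset.sum_insert hgi, add_zero, add_comm]
      · by_cases hkj : k = j
        · obtain rfl := hkj.symm
          rw [if_pos rfl, if_neg hki]
          simp only [hB, if_neg hki, eq_self_iff_true, if_true]
          rw [add_zero, Finset.sum_erase_add _ _ hg]
        · rw [if_neg hkj, if_neg hki, add_zero, add_zero]
          simp only [hB, if_neg hki, if_neg hkj]
    have hle := hopt B hBalloc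
    have h3 : SW s OPT + s i g ≤ SW s OPT + s j g := by
      rw [← hsw]; exact add_le_add hle (le_refl _)
    exact le_of_add_le_add_left h3
  -- Pointwise ≤ plus the sum inequality forces equality.
  intro g hg
  by_contra hne
  have hlt : s i g < s j g := lt_of_le_of_ne (key g hg) hne
  have : ∑ g ∈ OPT j, s i g < ∑ g ∈ OPT j, s j g :=
    Finset.sum_lt_sum (fun x hx => key x hx) ⟨g, hg, hlt⟩
  exact absurd hsa (not_le.mpr this)
end

section
/- Let OPT be an allocation maximizing the utilitarian social welfare (SW(OPT) = opt). If agent i sa-envies agent j in OPT, i.e., v_i(OPT_i) < v_i(OPT_j) and s_i(OPT_j) ≥ s_j(OPT_j), then s_i(OPT_j) = s_j(OPT_j). -/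
open Finset

/-- In an allocation `OPT` maximizing the utilitarian social welfare, if agent `i`
sa-envies agent `j` (i.e. `v i (OPT i) < v i (OPT j)` and `s i (OPT j) ≥ s j (OPT j)`),
then `s i (OPT j) = s j (OPT j)`. -/
theorem sa_envy_equal_impact_bundle (n : ℕ) (G : Type) [Fintype G] [DecidableEq G]
    (v s : Fin n → G → NNReal)
    (OPT : Fin n → Finset G) (hOPT : IsAllocation OPT)
    (hopt : ∀ B : Fin n → Finset G, IsAllocation B → SW s B ≤ SW s OPT)
    (i j : Fin n)
    (henvy : ∑ g ∈ OPT i, v i g < ∑ g ∈ OPT j, v i g)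
    (hsa : ∑ g ∈ OPT j, s j g ≤ ∑ g ∈ OPT j, s i g) :
    ∑ g ∈ OPT j, s i g = ∑ g ∈ OPT j, s j g := by
  have hij : i ≠ j := by
    rintro rfl; exact absurd henvy (lt_irrefl _)
  -- new allocation: give OPT j to i
  set B : Fin n → Finset G := fun k => if k = i then OPT i ∪ OPT j
    else if k = j then ∅ else OPT k with hB
  have hBi : B i = OPT i ∪ OPT j := by simp [hB]
  have hBj : B j = ∅ := by simp [hB, hij.symm]
  have hBk : ∀ k, k ≠ i → k ≠ j → B k = OPT k := by
    intro k h1 h2; simp [hB, h1, h2]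
  obtain ⟨hdisj, hcov⟩ := hOPT
  have hdisjij := hdisj i j hij
  have hBalloc : IsAllocation B := by
    constructor
    · intro a b hab
      rcases eq_or_ne a i with rfl | hai
      · rw [hBi]
        rcases eq_or_ne b j with rfl | hbj
        · rw [hBj]; exact disjoint_empty_right _
        · rw [hBk b (Ne.symm hab) hbj]
          exact Finset.disjoint_union_left.mpr ⟨hdisj _ _ hab, hdisj _ _ hbj.symm⟩
      · rcases eq_or_ne a j with rfl | haj
        · rw [hBj]; exact disjoint_empty_left _
        · rw [hBk a hai haj]
          rcases eq_or_ne b i with rfl | hbi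
          · rw [hBi]
            exact Finset.disjoint_union_right.mpr ⟨hdisj _ _ hai, hdisj _ _ haj⟩
          · rcases eq_or_ne b j with rfl | hbj
            · rw [hBj]; exact disjoint_empty_right _
            · rw [hBk b hbi hbj]; exact hdisj _ _ hab
    · intro g
      obtain ⟨k, hk⟩ := hcov g
      rcases eq_or_ne k i with hki | hki
      · exact ⟨i, by rw [hBi]; exact Finset.mem_union_left _ (hki ▸ hk)⟩
      · rcases eq_or_ne k j with hkj | hkj
        · exact ⟨i, by rw [hBi]; exact Finset.mem_union_right _ (hkj ▸ hk)⟩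
        · exact ⟨k, by rw [hBk k hki hkj]; exact hk⟩
  have hle := hopt B hBalloc
  -- key sum identity
  have hpair : ({i, j} : Finset (Fin n)) ⊆ univ := subset_univ _
  have hkey : SW s B + ∑ g ∈ OPT j, s j g = SW s OPT + ∑ g ∈ OPT j, s i g := by
    unfold SW
    rw [← Finset.sum_sdiff hpair, ← Finset.sum_sdiff hpair (f := fun k => ∑ g ∈ OPT k, s k g)]
    have hrest : ∑ k ∈ univ \ {i, j}, ∑ g ∈ B k, s k g
        = ∑ k ∈ univ \ {i, j}, ∑ g ∈ OPT k, s k g := by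
      apply Finset.sum_congr rfl
      intro k hk
      simp only [Finset.mem_sdiff, Finset.mem_insert, Finset.mem_singleton] at hk
      rw [hBk k (fun h => hk.2 (Or.inl h)) (fun h => hk.2 (Or.inr h))]
    rw [hrest, Finset.sum_pair hij, Finset.sum_pair hij, hBi, hBj,
      Finset.sum_union hdisjij]
    ring
  have hle2 : ∑ g ∈ OPT j, s i g ≤ ∑ g ∈ OPT j, s j g := by
    have := add_le_add_left hle (∑ g ∈ OPT j, s j g)
    rw [hkey] at this
    exact le_of_add_le_add_left this
  exact le_antisymm hle2 hsa
end

section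
/- For every fair division instance with social impact (with n agents and additive valuations and social impacts), there exists an allocation A that is sEF1 (socially aware envy-free up to one good) and satisfies SW(A) = opt, i.e., an sEF1 allocation that maximizes the utilitarian social welfare. -/
open Finset

/-- Socially aware envy-freeness up to one good: for every pair of agents `i, j` with
`A j ≠ ∅`, either `i` is EF1-satisfied towards `j`, or `j`'s bundle has strictly larger
social impact in `j`'s hands than it would have in `i`'s hands. -/
def sEF1 {n : ℕ} {G : Type} [DecidableEq G] (v s : Fin n → G → NNReal)
    (A : Fin n → Finset G) : Prop :=
  ∀ i j, A j ≠ ∅ →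
    (∃ g ∈ A j, ∑ g' ∈ (A j).erase g, v i g' ≤ ∑ g' ∈ A i, v i g') ∨
    ∑ g ∈ A j, s i g < ∑ g ∈ A j, s j g

/-- A finite "recurrent" orbit of a self-map, together with an inverse on the orbit. -/
lemma orbit_facts {α : Type*} [DecidableEq α] (f : α → α) {p : ℕ} (hp : 0 < p)
    (x : α) (hx : f^[p] x = x) :
    ∃ (O : Finset α) (G : α → α), x ∈ O ∧ (∀ y ∈ O, ∃ t, y = f^[t] x) ∧
      (∀ y ∈ O, f y ∈ O) ∧ (∀ y ∈ O, G y ∈ O) ∧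
      (∀ y ∈ O, f (G y) = y) ∧ (∀ y ∈ O, G (f y) = y) := by
  have hfix : ∀ t, f^[p * t] x = x := by
    intro t
    induction t with
    | zero => simp
    | succ t ih => rw [Nat.mul_succ, Function.iterate_add_apply, hx, ih]
  have horb : ∀ t, f^[t] x ∈ (Finset.range p).image (fun t => f^[t] x) := by
    intro t
    have ht : f^[t] x = f^[t % p] x := by
      conv_lhs => rw [← Nat.div_add_mod t p, Nat.add_comm,
        Function.iterate_add_apply, hfix]
    rw [ht]
    exact Finset.mem_image.2 ⟨t % p, Finset.mem_range.2 (Nat.mod_lt _ hp), rfl⟩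
  have hfixO : ∀ t, f^[p] (f^[t] x) = f^[t] x := by
    intro t
    calc f^[p] (f^[t] x) = f^[p + t] x := (Function.iterate_add_apply f p t x).symm
      _ = f^[t + p] x := by rw [Nat.add_comm]
      _ = f^[t] (f^[p] x) := Function.iterate_add_apply f t p x
      _ = f^[t] x := by rw [hx]
  refine ⟨(Finset.range p).image (fun t => f^[t] x), f^[p-1], ?_, ?_, ?_, ?_, ?_, ?_⟩
  · exact Finset.mem_image.2 ⟨0, Finset.mem_range.2 hp, rfl⟩
  · intro y hy
    obtain ⟨t, -, rfl⟩ := Finset.mem_image.1 hy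
    exact ⟨t, rfl⟩
  · intro y hy
    obtain ⟨t, -, rfl⟩ := Finset.mem_image.1 hy
    have h1 : f (f^[t] x) = f^[t+1] x := (Function.iterate_succ_apply' f t x).symm
    rw [h1]
    exact horb _
  · intro y hy
    obtain ⟨t, -, rfl⟩ := Finset.mem_image.1 hy
    have h1 : f^[p-1] (f^[t] x) = f^[(p-1) + t] x := (Function.iterate_add_apply f (p-1) t x).symm
    rw [h1]
    exact horb _
  · intro y hy
    obtain ⟨t, -, rfl⟩ := Finset.mem_image.1 hy
    have h1 : f^[1 + (p-1)] (f^[t] x) = f^[1] (f^[p-1] (f^[t] x)) :=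
      Function.iterate_add_apply f 1 (p-1) (f^[t] x)
    rw [show (1 : ℕ) + (p-1) = p by omega] at h1
    calc f (f^[p-1] (f^[t] x)) = f^[1] (f^[p-1] (f^[t] x)) := rfl
      _ = f^[p] (f^[t] x) := h1.symm
      _ = f^[t] x := hfixO t
  · intro y hy
    obtain ⟨t, -, rfl⟩ := Finset.mem_image.1 hy
    have h1 : f^[(p-1) + 1] (f^[t] x) = f^[p-1] (f^[1] (f^[t] x)) :=
      Function.iterate_add_apply f (p-1) 1 (f^[t] x)
    rw [show (p-1) + (1:ℕ) = p by omega] at h1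
    calc f^[p-1] (f (f^[t] x)) = f^[p-1] (f^[1] (f^[t] x)) := rfl
      _ = f^[p] (f^[t] x) := h1.symm
      _ = f^[t] x := hfixO t

section Aux

variable {n m : ℕ} (v s : Fin n → Fin m → NNReal)

/-- `i` is an argmax agent for good `g` w.r.t. social impact. -/
def Allowed (i : Fin n) (g : Fin m) : Prop := ∀ k, s k g ≤ s i g

/-- Invariant for partial allocations of the goods in `S`. -/
def InvP (S : Finset (Fin m)) (A : Fin n → Finset (Fin m)) : Prop :=
  (∀ i j, i ≠ j → Disjoint (A i) (A j)) ∧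
  (∀ g ∈ S, ∃ i, g ∈ A i) ∧
  (∀ i, ∀ g ∈ A i, g ∈ S ∧ Allowed s i g) ∧
  sEF1 v s A

/-- `i` envies `j` and `j`'s whole bundle is (weakly) allowed for `i`. -/
def Danger (A : Fin n → Finset (Fin m)) (i j : Fin n) : Prop :=
  (∑ g' ∈ A i, v i g') < (∑ g' ∈ A j, v i g') ∧ ∀ g' ∈ A j, s j g' ≤ s i g'

noncomputable def Phi (A : Fin n → Finset (Fin m)) : NNReal := ∑ i, ∑ g ∈ A i, v i g

lemma exists_safe (hn : 0 < n) {S : Finset (Fin m)} {A : Fin n → Finset (Fin m)}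
    (hA : InvP v s S A) (hmax : ∀ B, InvP v s S B → Phi v B ≤ Phi v A) (g : Fin m) :
    ∃ j, Allowed s j g ∧ ∀ i, Allowed s i g → ¬ Danger v s A i j := by
  classical
  by_contra hcon
  push_neg at hcon
  have hex : ∀ j, ∃ j', Allowed s j g → Allowed s j' g ∧ Danger v s A j' j := by
    intro j
    by_cases h : Allowed s j g
    · obtain ⟨i, hi1, hi2⟩ := hcon j h
      exact ⟨i, fun _ => ⟨hi1, hi2⟩⟩
    · exact ⟨j, fun h' => absurd h' h⟩
  choose f hf using hex
  obtain ⟨j0, -, hj0⟩ := Finset.exists_max_image Finset.univ (fun i => s i g)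
    ⟨⟨0, hn⟩, Finset.mem_univ _⟩
  have hj0' : Allowed s j0 g := fun k => hj0 k (Finset.mem_univ k)
  have hiter : ∀ t, Allowed s (f^[t] j0) g := by
    intro t
    induction t with
    | zero => exact hj0'
    | succ t ih =>
        rw [Function.iterate_succ_apply']
        exact (hf _ ih).1
  obtain ⟨a, b, hab, heq⟩ := Finite.exists_ne_map_eq_of_infinite (fun t => f^[t] j0)
  wlog hlt : a < b generalizing a b
  · exact this b a hab.symm heq.symm ((Ne.lt_or_gt hab).resolve_left hlt)
  have hp0 : 0 < b - a := Nat.sub_pos_of_lt hlt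
  have hxp : f^[b-a] (f^[a] j0) = f^[a] j0 := by
    rw [← Function.iterate_add_apply, Nat.sub_add_cancel hlt.le]
    exact heq.symm
  obtain ⟨O, G, hxO, hOit, hfO, hGm, hfG, hGf⟩ := orbit_facts f hp0 (f^[a] j0) hxp
  have hOal : ∀ y ∈ O, Allowed s y g := by
    intro y hy
    obtain ⟨t, rfl⟩ := hOit y hy
    have : f^[t] (f^[a] j0) = f^[t + a] j0 := (Function.iterate_add_apply f t a j0).symm
    rw [this]
    exact hiter _
  have hDan : ∀ y ∈ O, Danger v s A y (G y) := by
    intro y hy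
    have h1 := hGm y hy
    have h2 := (hf _ (hOal _ h1)).2
    rwa [hfG y hy] at h2
  set π : Fin n → Fin n := fun i => if i ∈ O then G i else i with hπdef
  have hπO : ∀ i ∈ O, π i = G i := fun i hi => if_pos hi
  have hπn : ∀ i, i ∉ O → π i = i := fun i hi => if_neg hi
  have hπinj : Function.Injective π := by
    intro i1 i2 h
    by_cases h1 : i1 ∈ O <;> by_cases h2 : i2 ∈ O
    · rw [hπO _ h1, hπO _ h2] at h
      have := congrArg f h
      rwa [hfG _ h1, hfG _ h2] at this
    · rw [hπO _ h1, hπn _ h2] at h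
      exact absurd (h ▸ hGm _ h1) h2
    · rw [hπn _ h1, hπO _ h2] at h
      exact absurd (h.symm ▸ hGm _ h2) h1
    · rwa [hπn _ h1, hπn _ h2] at h
  have hπsurj : ∀ y, ∃ i, π i = y := by
    intro y
    by_cases hy : y ∈ O
    · exact ⟨f y, by rw [hπO _ (hfO y hy)]; exact hGf y hy⟩
    · exact ⟨y, hπn y hy⟩
  have hvB : ∀ i, (∑ g' ∈ A i, v i g') ≤ ∑ g' ∈ A (π i), v i g' := by
    intro i
    by_cases hi : i ∈ O
    · rw [hπO _ hi]
      exact (hDan i hi).1.le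
    · rw [hπn _ hi]
  have hsB : ∀ j, ∀ g' ∈ A (π j), s (π j) g' ≤ s j g' := by
    intro j g' hg'
    by_cases hj : j ∈ O
    · rw [hπO _ hj] at hg' ⊢
      exact (hDan j hj).2 g' hg'
    · rw [hπn _ hj]
  obtain ⟨hdisj, hcov, hmem, hef⟩ := hA
  have hB : InvP v s S (fun i => A (π i)) := by
    refine ⟨?_, ?_, ?_, ?_⟩
    · intro i j hij
      exact hdisj _ _ (fun h => hij (hπinj h))
    · intro g' hg'
      obtain ⟨i, hi⟩ := hcov g' hg'
      obtain ⟨i', hi'⟩ := hπsurj i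
      exact ⟨i', by show g' ∈ A (π i'); rw [hi']; exact hi⟩
    · intro i g' hg'
      exact ⟨(hmem _ _ hg').1, fun k => le_trans ((hmem _ _ hg').2 k) (hsB i g' hg')⟩
    · intro i j hj
      rcases hef i (π j) hj with ⟨g', hg', hle⟩ | hs
      · exact Or.inl ⟨g', hg', hle.trans (hvB i)⟩
      · exact Or.inr (lt_of_lt_of_le hs (Finset.sum_le_sum (hsB j)))
  have hlt2 : Phi v A < Phi v (fun i => A (π i)) := by
    unfold Phi
    refine Finset.sum_lt_sum (fun i _ => hvB i) ⟨_, Finset.mem_univ (f^[a] j0), ?_⟩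
    show ∑ g' ∈ A (f^[a] j0), v (f^[a] j0) g' < ∑ g' ∈ A (π (f^[a] j0)), v (f^[a] j0) g'
    rw [hπO _ hxO]
    exact (hDan _ hxO).1
  exact absurd (hmax _ hB) (not_le.2 hlt2)

lemma step (hn : 0 < n) {S : Finset (Fin m)} {g : Fin m} (hg : g ∉ S)
    (IH : ∃ A, InvP v s S A) : ∃ A, InvP v s (insert g S) A := by
  classical
  obtain ⟨A0, hA0⟩ := IH
  obtain ⟨A, hAmem, hAM⟩ := Finset.exists_max_image
      (Finset.univ.filter (fun A => InvP v s S A)) (Phi v)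
      ⟨A0, Finset.mem_filter.2 ⟨Finset.mem_univ _, hA0⟩⟩
  have hA : InvP v s S A := (Finset.mem_filter.1 hAmem).2
  have hmax : ∀ B, InvP v s S B → Phi v B ≤ Phi v A :=
    fun B hB => hAM B (Finset.mem_filter.2 ⟨Finset.mem_univ _, hB⟩)
  obtain ⟨j, hjg, hsafe⟩ := exists_safe v s hn hA hmax g
  obtain ⟨hdisj, hcov, hmem, hef⟩ := hA
  have hgnot : ∀ i, g ∉ A i := fun i hgi => hg ((hmem i g hgi).1)
  set A' : Fin n → Finset (Fin m) := fun i => if i = j then insert g (A j) else A i with hA'def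
  have hA'j : A' j = insert g (A j) := if_pos rfl
  have hA'ne : ∀ i, i ≠ j → A' i = A i := fun i hi => if_neg hi
  have hsub : ∀ i, A i ⊆ A' i := by
    intro i
    by_cases hi : i = j
    · subst hi; rw [hA'j]; exact Finset.subset_insert _ _
    · rw [hA'ne i hi]
  have hvsub : ∀ i, (∑ g' ∈ A i, v i g') ≤ ∑ g' ∈ A' i, v i g' :=
    fun i => Finset.sum_le_sum_of_subset (hsub i)
  refine ⟨A', ?_, ?_, ?_, ?_⟩
  · intro i i' hne
    by_cases hi : i = j <;> by_cases hi' : i' = j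
    · exact absurd (hi.trans hi'.symm) hne
    · subst hi
      rw [hA'j, hA'ne i' hi']
      exact Finset.disjoint_insert_left.2 ⟨hgnot i', hdisj _ _ hne⟩
    · subst hi'
      rw [hA'j, hA'ne i hi]
      exact Finset.disjoint_insert_right.2 ⟨hgnot i, hdisj _ _ hne⟩
    · rw [hA'ne i hi, hA'ne i' hi']
      exact hdisj _ _ hne
  · intro g' hg'
    rcases Finset.mem_insert.1 hg' with rfl | hg'
    · exact ⟨j, by rw [hA'j]; exact Finset.mem_insert_self _ _⟩
    · obtain ⟨i, hi⟩ := hcov g' hg'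
      exact ⟨i, hsub i hi⟩
  · intro i g' hg'
    by_cases hi : i = j
    · subst hi
      rw [hA'j] at hg'
      rcases Finset.mem_insert.1 hg' with rfl | hg'
      · exact ⟨Finset.mem_insert_self _ _, hjg⟩
      · exact ⟨Finset.mem_insert_of_mem (hmem _ _ hg').1, (hmem _ _ hg').2⟩
    · rw [hA'ne i hi] at hg'
      exact ⟨Finset.mem_insert_of_mem (hmem _ _ hg').1, (hmem _ _ hg').2⟩
  · intro i j' hj'
    by_cases hjj : j' = j
    · subst hjj
      rw [hA'j]
      by_cases hal : Allowed s i g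
      · have hnd := hsafe i hal
        by_cases henvy : (∑ g' ∈ A i, v i g') < (∑ g' ∈ A j', v i g')
        · have hexs : ∃ g' ∈ A j', s i g' < s j' g' := by
            by_contra hno
            push_neg at hno
            exact hnd ⟨henvy, fun g' hg' => hno g' hg'⟩
          obtain ⟨g', hg', hsl⟩ := hexs
          refine Or.inr ?_
          rw [Finset.sum_insert (hgnot j'), Finset.sum_insert (hgnot j')]
          have hgg : s i g = s j' g := le_antisymm (hjg i) (hal j')
          rw [hgg]
          exact add_lt_add_right
            (Finset.sum_lt_sum (fun g'' hgm => (hmem j' g'' hgm).2 i) ⟨g', hg', hsl⟩) _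
        · refine Or.inl ⟨g, Finset.mem_insert_self _ _, ?_⟩
          rw [Finset.erase_insert (hgnot j')]
          exact (not_lt.1 henvy).trans (hvsub i)
      · have hsg : s i g < s j' g := by
          by_contra hge
          push_neg at hge
          exact hal (fun k => (hjg k).trans hge)
        refine Or.inr ?_
        rw [Finset.sum_insert (hgnot j'), Finset.sum_insert (hgnot j')]
        exact add_lt_add_of_lt_of_le hsg
          (Finset.sum_le_sum (fun g'' hgm => (hmem j' g'' hgm).2 i))
    · rw [hA'ne j' hjj] at hj' ⊢
      rcases hef i j' hj' with ⟨g', hg', hle⟩ | hs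
      · exact Or.inl ⟨g', hg', hle.trans (hvsub i)⟩
      · exact Or.inr hs

lemma exists_invP (hn : 0 < n) (S : Finset (Fin m)) : ∃ A, InvP v s S A := by
  classical
  induction S using Finset.induction_on with
  | empty =>
      refine ⟨fun _ => ∅, fun i j _ => Finset.disjoint_empty_left _,
        fun g h => absurd h (Finset.notMem_empty g),
        fun i g h => absurd h (Finset.notMem_empty g),
        fun i j h => absurd rfl h⟩
  | insert _ _ hg ih => exact step v s hn hg ih

lemma sum_partition {X : Fin n → Finset (Fin m)} (hX : IsAllocation X)
    (F : Fin m → NNReal) : ∑ i, ∑ g ∈ X i, F g = ∑ g, F g := by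
  classical
  have hdisjX : (↑(Finset.univ : Finset (Fin n)) : Set (Fin n)).PairwiseDisjoint X :=
    fun i _ j _ hij => hX.1 i j hij
  rw [← Finset.sum_biUnion hdisjX]
  have huniv : Finset.univ.biUnion X = Finset.univ := by
    ext g'
    simp only [Finset.mem_biUnion, Finset.mem_univ, true_and, iff_true]
    exact hX.2 g'
  rw [huniv]

end Aux

/-- For every instance with additive valuations and social impacts, there exists an
allocation that is sEF1 and maximizes the utilitarian social welfare. -/
theorem sef1_max_utilitarian (n m : ℕ) (hn : 0 < n)
    (v s : Fin n → Fin m → NNReal) :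
    ∃ A : Fin n → Finset (Fin m), IsAllocation A ∧ sEF1 v s A ∧
      ∀ B : Fin n → Finset (Fin m), IsAllocation B → SW s B ≤ SW s A := by
  classical
  obtain ⟨A, hdisj, hcov, hmem, hef⟩ := exists_invP v s hn Finset.univ
  have hcov' : ∀ g, ∃ i, g ∈ A i := fun g => hcov g (Finset.mem_univ g)
  have hallocA : IsAllocation A := ⟨hdisj, hcov'⟩
  refine ⟨A, hallocA, hef, ?_⟩
  intro B hB
  have hne : (Finset.univ : Finset (Fin n)).Nonempty := ⟨⟨0, hn⟩, Finset.mem_univ _⟩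
  set F : Fin m → NNReal := fun g => Finset.univ.sup' hne (fun k => s k g) with hF
  have h1 : SW s B ≤ ∑ g, F g := by
    rw [← sum_partition hB F]
    exact Finset.sum_le_sum (fun i _ => Finset.sum_le_sum
      (fun g _ => Finset.le_sup' (fun k => s k g) (Finset.mem_univ i)))
  have h2 : SW s A = ∑ g, F g := by
    rw [← sum_partition hallocA F]
    refine Finset.sum_congr rfl (fun i _ => Finset.sum_congr rfl (fun g hg => ?_))
    exact le_antisymm (Finset.le_sup' (fun k => s k g) (Finset.mem_univ i))
      (Finset.sup'_le hne _ (fun k _ => (hmem i g hg).2 k))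
  rw [h2]
  exact h1
end
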